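/- arXiv:2206.14528 — 10 statements merged into one kernel-verified Lean document; each statement's English description precedes it below -/
import Mathlib

section
/- Let P be an m×m real symmetric matrix with eigenvalues α₁ ≤ α₂ ≤ … ≤ α_m listed in ascending order with multiplicity, let d ≤ m, and let Λ = diag(λ₁, …, λ_d) with λ₁ ≥ λ₂ ≥ … ≥ λ_d ≥ 0. Then the minimum of tr(S P Sᵀ) over all S ∈ ℝ^{d×m} satisfying S Sᵀ = Λ equals ∑_{j=1}^{d} α_j λ_j; that is, every such S satisfies tr(S P Sᵀ) ≥ ∑_{j=1}^{d} α_j λ_j, and equality is attained by S = √Λ Xᵀ, where the columns of X ∈ ℝ^{m×d} are pairwise orthonormal eigenvectors of P associated with the d smallest eigenvalues α₁, …, α_d and √Λ = diag(√λ₁, …, √λ_d). -/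
open Matrix Finset

/-!
In the orthonormal eigenbasis of `P` (the rows of `V`) the matrix `W = S Vᵀ` satisfies
`W Wᵀ = Λ` and `tr (S P Sᵀ) = ∑ⱼ λⱼ rⱼ`, where `rⱼ` is the Rayleigh quotient of `diag α` at the
normalised `j`-th row of `W`. Writing each `λⱼ` as a sum of the nonnegative gaps `λₖ - λₖ₊₁`
(Abel summation) reduces the bound to Ky Fan's inequality: the Rayleigh quotients of `k`
orthonormal vectors sum to at least `α₁ + ⋯ + αₖ`. Indeed the weights `tᵢ = ∑ⱼ uⱼᵢ²` lie in
`[0, 1]` (they are the diagonal of the projection `UᵀU`) and sum to `k`, and against such weights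
a monotone `α` is smallest when they sit on the first `k` indices.
-/

theorem Monotone.sum_Iic_le_sum_mul {κ : Type*} [Fintype κ] [LinearOrder κ]
    [LocallyFiniteOrderBot κ] {α t : κ → ℝ} (hα : Monotone α) (ht0 : ∀ i, 0 ≤ t i)
    (ht1 : ∀ i, t i ≤ 1) (p : κ) (hsum : ∑ i, t i = #(Iic p)) :
    ∑ i ∈ Iic p, α i ≤ ∑ i, α i * t i := by
  have key : ∀ i, α p * (t i - if i ≤ p then 1 else 0) ≤ α i * t i - if i ≤ p then α i else 0 := by
    intro i
    split_ifs with h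
    · nlinarith [hα h, ht1 i]
    · nlinarith [hα (le_of_not_ge h), ht0 i]
  have := sum_le_sum fun i (_ : i ∈ univ) => key i
  simp only [← mul_sum, sum_sub_distrib, hsum, ← sum_filter,
    filter_ge_eq_Iic, sum_const, nsmul_one, sub_self, mul_zero] at this
  linarith

theorem Matrix.transpose_mul_self_diag_le_one {ι κ : Type*} [Fintype ι] [Fintype κ] [DecidableEq ι]
    {U : Matrix ι κ ℝ} (hU : U * Uᵀ = 1) (i : κ) : (Uᵀ * U) i i ≤ 1 := by
  set G := Uᵀ * U
  have hidem : G * G = G := by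
    simp only [G, Matrix.mul_assoc, ← Matrix.mul_assoc U, hU, Matrix.one_mul]
  have hsymm : Gᵀ = G := by simp [G, Matrix.transpose_mul]
  have hGii : G i i = ∑ l, G i l ^ 2 := by
    conv_lhs => rw [← hidem]
    rw [Matrix.mul_apply]
    refine sum_congr rfl fun l _ => ?_
    rw [sq, ← Matrix.transpose_apply G l i, hsymm]
  have : G i i ^ 2 ≤ G i i := hGii ▸ single_le_sum (fun l _ => sq_nonneg (G i l)) (mem_univ i)
  nlinarith

theorem Matrix.sum_Iic_le_trace_mul_diagonal_mul_transpose {ι κ : Type*} [Fintype ι] [DecidableEq ι]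
    [Fintype κ] [LinearOrder κ] [LocallyFiniteOrderBot κ] {α : κ → ℝ} (hα : Monotone α)
    {U : Matrix ι κ ℝ} (hU : U * Uᵀ = 1) (p : κ) (hp : #(Iic p) = Fintype.card ι) :
    ∑ i ∈ Iic p, α i ≤ (U * diagonal α * Uᵀ).trace := by
  have htrace : (U * diagonal α * Uᵀ).trace = ∑ i, α i * (Uᵀ * U) i i := by
    rw [Matrix.trace_mul_cycle, Matrix.trace]
    simp [mul_comm]
  have hsum : ∑ i, (Uᵀ * U) i i = #(Iic p) := by
    have : (Uᵀ * U).trace = Fintype.card ι := by rw [trace_mul_comm, hU, trace_one]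
    simpa [Matrix.trace, hp] using this
  rw [htrace]
  refine hα.sum_Iic_le_sum_mul (fun i => ?_) (transpose_mul_self_diag_le_one hU) p hsum
  rw [Matrix.mul_apply]
  exact sum_nonneg fun j _ => mul_self_nonneg _

theorem Fin.sum_mul_le_sum_mul_of_sum_Iic_le : ∀ {d : ℕ} {lam a b : Fin d → ℝ},
    Antitone lam → (∀ j, 0 ≤ lam j) → (∀ k, 0 < lam k → ∑ j ∈ Iic k, a j ≤ ∑ j ∈ Iic k, b j) →
    ∑ j, lam j * a j ≤ ∑ j, lam j * b j
  | 0, _, _, _, _, _, _ => by simp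
  | d + 1, lam, a, b, hanti, hnn, hab => by
    set μ := lam (Fin.last d)
    have split : ∀ c : Fin (d + 1) → ℝ,
        ∑ j, lam j * c j = ∑ j : Fin d, (lam j.castSucc - μ) * c j.castSucc + μ * ∑ j, c j := by
      intro c
      rw [Fin.sum_univ_castSucc, Fin.sum_univ_castSucc c, mul_add, mul_sum, ← add_assoc,
        ← sum_add_distrib]
      congr 1
      exact sum_congr rfl fun j _ => by ring
    have hinit : ∑ j : Fin d, (lam j.castSucc - μ) * a j.castSucc ≤
        ∑ j : Fin d, (lam j.castSucc - μ) * b j.castSucc := by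
      refine Fin.sum_mul_le_sum_mul_of_sum_Iic_le (fun i j hij => ?_) (fun j => ?_) fun k hk => ?_
      · simpa using hanti (Fin.castSucc_le_castSucc_iff.mpr hij)
      · simpa using hanti (Fin.le_last j.castSucc)
      · simpa only [← Fin.sum_Iic_castSucc] using hab _ (by linarith [hnn (Fin.last d)])
    have hlast : μ * ∑ j, a j ≤ μ * ∑ j, b j := by
      rcases (hnn (Fin.last d)).eq_or_lt with h | h
      · simp [μ, ← h]
      · have hall := hab _ h
        rw [show Iic (Fin.last d) = univ from Iic_top] at hall
        exact mul_le_mul_of_nonneg_left hall h.le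
    rw [split, split]
    linarith

theorem Matrix.exists_eq_diagonal_sqrt_mul_of_mul_transpose_eq_diagonal {ι κ : Type*}
    [Fintype ι] [Fintype κ] [DecidableEq ι] {lam : ι → ℝ} (hnn : ∀ j, 0 ≤ lam j) {W : Matrix ι κ ℝ}
    (hW : W * Wᵀ = diagonal lam) :
    ∃ U : Matrix ι κ ℝ, W = diagonal (fun j => √(lam j)) * U ∧
      U * Uᵀ = diagonal fun j => if lam j = 0 then 0 else 1 := by
  have hrow : ∀ j, lam j = 0 → W j = 0 := by
    intro j hj
    have hjj := congrFun (congrFun hW j) j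
    rw [diagonal_apply_eq, hj] at hjj
    exact dotProduct_self_eq_zero.mp hjj
  -- Normalise the rows of `W`; a row with `lam j = 0` vanishes, so the junk value `(√0)⁻¹ = 0`
  -- does no harm.
  refine ⟨diagonal (fun j => (√(lam j))⁻¹) * W, ?_, ?_⟩
  · rw [← Matrix.mul_assoc, diagonal_mul_diagonal]
    ext j i
    rw [diagonal_mul]
    rcases (hnn j).eq_or_lt with h | h
    · simp [hrow j h.symm]
    · rw [mul_inv_cancel₀ (Real.sqrt_pos.mpr h).ne', one_mul]
  · rw [transpose_mul, diagonal_transpose, Matrix.mul_assoc, ← Matrix.mul_assoc W, hW,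
      diagonal_mul_diagonal, diagonal_mul_diagonal]
    congr 1
    funext j
    split_ifs with h
    · simp [h]
    · have hpos : 0 < √(lam j) := Real.sqrt_pos.mpr ((hnn j).lt_of_ne' h)
      field_simp
      rw [Real.sq_sqrt (hnn j)]

theorem Matrix.sum_mul_le_trace_of_mul_transpose_eq_diagonal {m d : ℕ} (hd : d ≤ m)
    {α : Fin m → ℝ} (hα : Monotone α) {lam : Fin d → ℝ} (hanti : Antitone lam)
    (hnn : ∀ j, 0 ≤ lam j) {W : Matrix (Fin d) (Fin m) ℝ} (hW : W * Wᵀ = diagonal lam) :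
    ∑ j, α (Fin.castLE hd j) * lam j ≤ (W * diagonal α * Wᵀ).trace := by
  obtain ⟨U, hWU, hUU⟩ := exists_eq_diagonal_sqrt_mul_of_mul_transpose_eq_diagonal hnn hW
  set D := diagonal fun j => √(lam j)
  have htrace : (W * diagonal α * Wᵀ).trace = ∑ j, lam j * (U * diagonal α * Uᵀ) j j := by
    rw [hWU, transpose_mul, diagonal_transpose,
      show D * U * diagonal α * (Uᵀ * D) = D * (U * diagonal α * Uᵀ) * D by
        simp only [Matrix.mul_assoc]]
    simp only [Matrix.trace, diag_apply, D, diagonal_mul, mul_diagonal]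
    refine sum_congr rfl fun j _ => ?_
    linear_combination (U * diagonal α * Uᵀ) j j * Real.mul_self_sqrt (hnn j)
  simp only [htrace, mul_comm (α _)]
  refine Fin.sum_mul_le_sum_mul_of_sum_Iic_le hanti hnn fun k hk => ?_
  set V : Matrix (Iic k) (Fin m) ℝ := U.submatrix Subtype.val id
  have hV : V * Vᵀ = 1 := by
    ext ⟨j, hj⟩ ⟨j', hj'⟩
    have hj0 : lam j ≠ 0 := (hk.trans_le (hanti (mem_Iic.mp hj))).ne'
    change (U * Uᵀ) j j' = _
    simp only [hUU, diagonal_apply, one_apply, Subtype.mk.injEq, hj0, if_false]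
  calc ∑ j ∈ Iic k, α (Fin.castLE hd j) = ∑ i ∈ Iic (Fin.castLE hd k), α i := by
        rw [← Fin.finsetImage_castLE_Iic, sum_image (Fin.castLE_injective hd).injOn]
    _ ≤ (V * diagonal α * Vᵀ).trace :=
        sum_Iic_le_trace_mul_diagonal_mul_transpose hα hV _
          (by rw [Fintype.card_coe, Fin.card_Iic, Fin.card_Iic, Fin.val_castLE])
    _ = ∑ j ∈ Iic k, (U * diagonal α * Uᵀ) j j :=
        sum_coe_sort (Iic k) fun j => (U * diagonal α * Uᵀ) j j

theorem Matrix.mul_eq_mul_diagonal_of_mulVec_eq_smul {R n k : Type*} [CommSemiring R]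
    [Fintype n] [Fintype k] [DecidableEq k] {P : Matrix n n R} {X : Matrix n k R} {β : k → R}
    (h : ∀ j, P *ᵥ (fun i => X i j) = β j • fun i => X i j) : P * X = X * diagonal β := by
  ext i j
  rw [mul_diagonal, mul_comm]
  exact congrFun (h j) i

theorem Matrix.mul_transpose_self_of_diagonal_mul_transpose {R n k : Type*} [CommSemiring R]
    [Fintype n] [Fintype k] [DecidableEq k] {X : Matrix n k R} (hX : Xᵀ * X = 1) (c : k → R) :
    (diagonal c * Xᵀ) * (diagonal c * Xᵀ)ᵀ = diagonal fun j => c j * c j := by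
  rw [transpose_mul, transpose_transpose, diagonal_transpose, Matrix.mul_assoc,
    ← Matrix.mul_assoc Xᵀ, hX, Matrix.one_mul, diagonal_mul_diagonal]

theorem Matrix.trace_mul_mul_transpose_of_diagonal_mul_transpose {R n k : Type*} [CommSemiring R]
    [Fintype n] [Fintype k] [DecidableEq k] {P : Matrix n n R} {X : Matrix n k R} {β : k → R}
    (hX : Xᵀ * X = 1) (hPX : P * X = X * diagonal β) (c : k → R) :
    ((diagonal c * Xᵀ) * P * (diagonal c * Xᵀ)ᵀ).trace = ∑ j, β j * (c j * c j) := by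
  rw [transpose_mul, transpose_transpose, diagonal_transpose,
    show diagonal c * Xᵀ * P * (X * diagonal c) = diagonal c * Xᵀ * (P * X) * diagonal c by
      simp only [Matrix.mul_assoc],
    hPX, Matrix.mul_assoc (diagonal c), ← Matrix.mul_assoc Xᵀ, hX, Matrix.one_mul,
    diagonal_mul_diagonal, diagonal_mul_diagonal, trace_diagonal]
  exact sum_congr rfl fun j _ => by ring

theorem min_trace_SPSt_general (m d : ℕ) (hd : d ≤ m)
    (P : Matrix (Fin m) (Fin m) ℝ)
    (α : Fin m → ℝ) (hα : Monotone α)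
    (v : Fin m → (Fin m → ℝ))
    (hv_orth : ∀ i j : Fin m, v i ⬝ᵥ v j = if i = j then (1 : ℝ) else 0)
    (hv_eig : ∀ j : Fin m, P *ᵥ v j = α j • v j)
    (lam : Fin d → ℝ)
    (hlam_anti : ∀ i j : Fin d, i ≤ j → lam j ≤ lam i)
    (hlam_nonneg : ∀ j : Fin d, 0 ≤ lam j) :
    (∀ S : Matrix (Fin d) (Fin m) ℝ, S * Sᵀ = Matrix.diagonal lam →
      ∑ j : Fin d, α (Fin.castLE hd j) * lam j ≤ (S * P * Sᵀ).trace) ∧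
    (∃ X : Matrix (Fin m) (Fin d) ℝ, Xᵀ * X = 1 ∧
      (∀ j : Fin d, P *ᵥ (fun i => X i j) = α (Fin.castLE hd j) • (fun i => X i j)) ∧
      (Matrix.diagonal (fun j => Real.sqrt (lam j)) * Xᵀ) *
          (Matrix.diagonal (fun j => Real.sqrt (lam j)) * Xᵀ)ᵀ = Matrix.diagonal lam ∧
      ((Matrix.diagonal (fun j => Real.sqrt (lam j)) * Xᵀ) * P *
          (Matrix.diagonal (fun j => Real.sqrt (lam j)) * Xᵀ)ᵀ).trace =
        ∑ j : Fin d, α (Fin.castLE hd j) * lam j) := by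
  set V : Matrix (Fin m) (Fin m) ℝ := Matrix.of v
  have hVV : V * Vᵀ = 1 := by
    ext i j
    rw [one_apply]
    exact hv_orth i j
  have hVtV : Vᵀ * V = 1 := mul_eq_one_comm.mp hVV
  have hPV : P * Vᵀ = Vᵀ * diagonal α := mul_eq_mul_diagonal_of_mulVec_eq_smul hv_eig
  have hP : P = Vᵀ * diagonal α * V := by rw [← hPV, Matrix.mul_assoc, hVtV, Matrix.mul_one]
  refine ⟨fun S hS => ?_, ?_⟩
  · have hW : (S * Vᵀ) * (S * Vᵀ)ᵀ = diagonal lam := by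
      rw [transpose_mul, transpose_transpose, Matrix.mul_assoc, ← Matrix.mul_assoc Vᵀ, hVtV,
        Matrix.one_mul, hS]
    simpa only [hP, transpose_mul, transpose_transpose, Matrix.mul_assoc] using
      sum_mul_le_trace_of_mul_transpose_eq_diagonal hd hα (fun i j => hlam_anti i j)
        hlam_nonneg hW
  · set X : Matrix (Fin m) (Fin d) ℝ := Vᵀ.submatrix id (Fin.castLE hd)
    have hX : Xᵀ * X = 1 := by
      ext j k
      simp only [one_apply, ← (Fin.castLE_injective hd).eq_iff]
      exact hv_orth _ _
    have hcol : ∀ j, P *ᵥ (fun i => X i j) = α (Fin.castLE hd j) • fun i => X i j :=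
      fun j => hv_eig _
    refine ⟨X, hX, hcol, ?_, ?_⟩
    · rw [mul_transpose_self_of_diagonal_mul_transpose hX]
      exact congrArg diagonal (funext fun j => Real.mul_self_sqrt (hlam_nonneg j))
    · rw [trace_mul_mul_transpose_of_diagonal_mul_transpose hX
        (mul_eq_mul_diagonal_of_mulVec_eq_smul hcol)]
      exact sum_congr rfl fun j _ => by rw [Real.mul_self_sqrt (hlam_nonneg j)]

/-- Minimum of `tr(S P Sᵀ)` subject to `S Sᵀ = Λ` equals `∑ αⱼ λⱼ`,
attained at `S = √Λ Xᵀ` where the columns of `X` are orthonormal eigenvectors of `P`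
associated with the `d` smallest eigenvalues. The symmetric matrix `P` is described
via an orthonormal eigenbasis `v` with eigenvalues `α` listed in ascending order. -/
theorem min_trace_SPSt (m d : ℕ) (hd : d ≤ m)
    (P : Matrix (Fin m) (Fin m) ℝ) (hP : P.IsSymm)
    (α : Fin m → ℝ) (hα : Monotone α)
    (v : Fin m → (Fin m → ℝ))
    (hv_orth : ∀ i j : Fin m, v i ⬝ᵥ v j = if i = j then (1 : ℝ) else 0)
    (hv_eig : ∀ j : Fin m, P *ᵥ v j = α j • v j)
    (lam : Fin d → ℝ)
    (hlam_anti : ∀ i j : Fin d, i ≤ j → lam j ≤ lam i)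
    (hlam_nonneg : ∀ j : Fin d, 0 ≤ lam j) :
    (∀ S : Matrix (Fin d) (Fin m) ℝ, S * Sᵀ = Matrix.diagonal lam →
      ∑ j : Fin d, α (Fin.castLE hd j) * lam j ≤ (S * P * Sᵀ).trace) ∧
    (∃ X : Matrix (Fin m) (Fin d) ℝ, Xᵀ * X = 1 ∧
      (∀ j : Fin d, P *ᵥ (fun i => X i j) = α (Fin.castLE hd j) • (fun i => X i j)) ∧
      (Matrix.diagonal (fun j => Real.sqrt (lam j)) * Xᵀ) *
          (Matrix.diagonal (fun j => Real.sqrt (lam j)) * Xᵀ)ᵀ = Matrix.diagonal lam ∧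
      ((Matrix.diagonal (fun j => Real.sqrt (lam j)) * Xᵀ) * P *
          (Matrix.diagonal (fun j => Real.sqrt (lam j)) * Xᵀ)ᵀ).trace =
        ∑ j : Fin d, α (Fin.castLE hd j) * lam j) :=
  min_trace_SPSt_general m d hd P α hα v hv_orth hv_eig lam hlam_anti hlam_nonneg
end

section
/- Let Q be an m×m real symmetric matrix, let u ∈ ℝ^m be a unit eigenvector of Q, let d ≤ m − 1, and let Λ = diag(λ₁, …, λ_d) with λ₁ ≥ λ₂ ≥ … ≥ λ_d ≥ 0. Then there exists X₀ ∈ ℝ^{m×d} with X₀ᵀ X₀ = I_d and X₀ᵀ u = 0 whose columns are pairwise orthogonal unit eigenvectors of Q, each orthogonal to u, associated with the d largest eigenvalues of Q after removing one occurrence of the eigenvalue of u (ordered nonincreasingly), such that for every X ∈ ℝ^{m×d} with Xᵀ X = I_d and Xᵀ u = 0 one has tr(Xᵀ Q X Λ) ≤ tr(X₀ᵀ Q X₀ Λ). In other words, the maximum of tr(Xᵀ Q X Λ) subject to Xᵀ X = I_d and Xᵀ u = 0 is attained at the d top eigenvectors of Q excluding the vector u. -/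
/-!
Completing `w` by `u` gives an orthonormal eigenbasis `W` of `Q`. For admissible `X` the matrix
`C = Wᵀ X` again has orthonormal columns, its last row vanishes since `Xᵀ u = 0`, and
`Xᵀ Q X = Cᵀ diag(β, μ) C`, so `tr(Xᵀ Q X Λ) = ∑ⱼ λⱼ ∑ᵢ βᵢ Cᵢⱼ²` with `(Cᵢⱼ²)` doubly
substochastic. Abel summation against the nonnegative nonincreasing `λ` reduces the bound
`∑ⱼ λⱼ βⱼ` (attained by the top eigenvectors) to its partial sums, which are Ky Fan's
inequality: weights in `[0, 1]` of total mass `k` collect at most the `k` largest `βᵢ`.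
-/

open Matrix Finset

theorem sum_mul_le_sum_of_threshold {ι : Type*} [Fintype ι] {β ρ : ι → ℝ}
    (s : Finset ι) (c : ℝ) (hs : ∀ i ∈ s, c ≤ β i) (hsc : ∀ i ∉ s, β i ≤ c)
    (hρ0 : ∀ i, 0 ≤ ρ i) (hρ1 : ∀ i, ρ i ≤ 1) (hρ : ∑ i, ρ i = #s) :
    ∑ i, β i * ρ i ≤ ∑ i ∈ s, β i := by
  classical
  have hterm : ∑ i, (β i - c) * (ρ i - if i ∈ s then 1 else 0) ≤ 0 := by
    refine sum_nonpos fun i _ => ?_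
    split_ifs with hi
    · nlinarith [hs i hi, hρ1 i]
    · nlinarith [hsc i hi, hρ0 i]
  have hexpand : ∑ i, (β i - c) * (ρ i - if i ∈ s then 1 else 0)
      = ∑ i, β i * ρ i - ∑ i ∈ s, β i - c * (∑ i, ρ i - #s) := by
    simp only [sub_mul, mul_sub, mul_ite, mul_one, mul_zero, sum_sub_distrib, sum_ite_mem,
      univ_inter, ← mul_sum, sum_const, nsmul_eq_mul]
    ring
  rw [hexpand, hρ, sub_self, mul_zero, sub_zero, sub_nonpos] at hterm
  exact hterm

theorem sum_mul_nonpos_of_sum_Iic_nonpos {d : ℕ} {lam g : Fin d → ℝ} (hlam : Antitone lam)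
    (hlam0 : ∀ j, 0 ≤ lam j) (hg : ∀ k, ∑ j ∈ Iic k, g j ≤ 0) : ∑ j, lam j * g j ≤ 0 := by
  induction d with
  | zero => simp
  | succ d ih =>
    have hinit : ∑ j : Fin d, (lam j.castSucc - lam (Fin.last d)) * g j.castSucc ≤ 0 :=
      ih (fun i j hij => sub_le_sub_right (hlam (Fin.castSucc_le_castSucc_iff.2 hij)) _)
        (fun j => sub_nonneg.2 (hlam (Fin.le_last _)))
        (fun k => by simpa only [Fin.sum_Iic_castSucc] using hg k.castSucc)
    have hall : ∑ j, g j ≤ 0 := by simpa only [← Fin.top_eq_last, Iic_top] using hg (Fin.last d)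
    calc ∑ j, lam j * g j
        = ∑ j : Fin d, (lam j.castSucc - lam (Fin.last d)) * g j.castSucc
          + lam (Fin.last d) * ∑ j, g j := by
          simp only [Fin.sum_univ_castSucc, sub_mul, sum_sub_distrib, mul_add, mul_sum]
          ring
      _ ≤ 0 := add_nonpos hinit (mul_nonpos_of_nonneg_of_nonpos (hlam0 _) hall)

theorem sum_mul_sum_le_of_substochastic {n d : ℕ} (hdn : d ≤ n) {β : Fin n → ℝ}
    (hβ : Antitone β) {lam : Fin d → ℝ} (hlam : Antitone lam) (hlam0 : ∀ j, 0 ≤ lam j)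
    {D : Fin n → Fin d → ℝ} (hD0 : ∀ i j, 0 ≤ D i j) (hcol : ∀ j, ∑ i, D i j = 1)
    (hrow : ∀ i, ∑ j, D i j ≤ 1) :
    ∑ j, lam j * ∑ i, β i * D i j ≤ ∑ j, lam j * β (Fin.castLE hdn j) := by
  suffices ∑ j, lam j * (∑ i, β i * D i j - β (Fin.castLE hdn j)) ≤ 0 by
    simpa only [mul_sub, sum_sub_distrib, sub_nonpos] using this
  refine sum_mul_nonpos_of_sum_Iic_nonpos hlam hlam0 fun k => ?_
  have hKyFan := sum_mul_le_sum_of_threshold (β := β) (ρ := fun i => ∑ j ∈ Iic k, D i j)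
    (Iic (k.castLE hdn)) (β (k.castLE hdn)) (fun i hi => hβ (mem_Iic.1 hi))
    (fun i hi => hβ (not_le.1 (mem_Iic.not.1 hi)).le) (fun i => sum_nonneg fun j _ => hD0 i j)
    (fun i => (sum_le_sum_of_subset_of_nonneg (subset_univ _) fun j _ _ => hD0 i j).trans (hrow i))
    (by rw [sum_comm]; simp [hcol])
  rw [sum_sub_distrib, ← Fin.sum_Iic_castLE, sub_nonpos]
  calc ∑ j ∈ Iic k, ∑ i, β i * D i j = ∑ i, β i * ∑ j ∈ Iic k, D i j := by
        rw [sum_comm]; simp only [mul_sum]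
    _ ≤ _ := hKyFan

theorem Matrix.sum_sq_le_one_of_transpose_mul_self_eq_one {m d : Type*} [Fintype m] [Fintype d]
    [DecidableEq d] {C : Matrix m d ℝ} (hC : Cᵀ * C = 1) (i : m) : ∑ j, C i j ^ 2 ≤ 1 := by
  set P := C * Cᵀ
  have hP : P * P = P := by rw [Matrix.mul_assoc, ← Matrix.mul_assoc Cᵀ, hC, Matrix.one_mul]
  have hPii : P i i = ∑ j, C i j ^ 2 := by simp [P, mul_apply, sq]
  have hPsq : P i i ^ 2 ≤ P i i := calc
    P i i ^ 2 ≤ ∑ k, P i k ^ 2 := single_le_sum (f := fun k => P i k ^ 2)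
      (fun k _ => sq_nonneg _) (mem_univ i)
    _ = (P * P) i i := by simp [P, mul_apply, sq, mul_comm]
    _ = P i i := by rw [hP]
  nlinarith

theorem Matrix.transpose_mul_mul_eq_diagonal {m k : Type*} [Fintype m] [Fintype k]
    [DecidableEq k] {Q : Matrix m m ℝ} {V : Matrix m k ℝ} {α : k → ℝ} (hV : Vᵀ * V = 1)
    (hQV : Q * V = V * diagonal α) : Vᵀ * Q * V = diagonal α := by
  rw [Matrix.mul_assoc, hQV, ← Matrix.mul_assoc, hV, Matrix.one_mul]

theorem Matrix.of_mul_transpose_eq_one_of_orthonormal {m k : Type*} [Fintype m] [DecidableEq k]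
    {v : k → m → ℝ} (hv : ∀ i j, v i ⬝ᵥ v j = if i = j then 1 else 0) :
    of v * (of v)ᵀ = 1 := by
  ext i j
  simpa [mul_apply, dotProduct, one_apply] using hv i j

theorem Matrix.mul_transpose_of_eq_mul_diagonal {m k : Type*} [Fintype m] [Fintype k]
    [DecidableEq k] {Q : Matrix m m ℝ} {v : k → m → ℝ} {α : k → ℝ}
    (hv : ∀ i, Q *ᵥ v i = α i • v i) : Q * (of v)ᵀ = (of v)ᵀ * diagonal α := by
  ext x i
  rw [mul_diagonal]
  simpa [mul_apply, mulVec, dotProduct, mul_comm] using congrFun (hv i) x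

theorem Fin.snoc_dotProduct_snoc_eq_ite {m : Type*} [Fintype m] {n : ℕ}
    {v : Fin n → m → ℝ} {u : m → ℝ} (hv : ∀ i j, v i ⬝ᵥ v j = if i = j then 1 else 0)
    (hvu : ∀ i, v i ⬝ᵥ u = 0) (hu : u ⬝ᵥ u = 1) (i j : Fin (n + 1)) :
    Fin.snoc (α := fun _ => m → ℝ) v u i ⬝ᵥ Fin.snoc (α := fun _ => m → ℝ) v u j =
      if i = j then 1 else 0 := by
  induction i using Fin.lastCases <;> induction j using Fin.lastCases <;>
    simp [hv, hvu, hu, dotProduct_comm u, Fin.castSucc_ne_last, (Fin.castSucc_ne_last _).symm]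

theorem Matrix.trace_transpose_mul_diagonal_snoc_mul_le {n d : ℕ} (hdn : d ≤ n) {β : Fin n → ℝ}
    (hβ : Antitone β) {lam : Fin d → ℝ} (hlam : Antitone lam) (hlam0 : ∀ j, 0 ≤ lam j) (μ : ℝ)
    {C : Matrix (Fin (n + 1)) (Fin d) ℝ} (hC : Cᵀ * C = 1) (hlast : ∀ j, C (Fin.last n) j = 0) :
    (Cᵀ * diagonal (Fin.snoc β μ) * C * diagonal lam).trace ≤
      ∑ j, lam j * β (Fin.castLE hdn j) := by
  have hcol : ∀ j, ∑ i : Fin n, C i.castSucc j ^ 2 = 1 := fun j => by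
    have := congrFun (congrFun hC j) j
    simpa [mul_apply, Fin.sum_univ_castSucc, hlast, sq] using this
  have hrow : ∀ i : Fin n, ∑ j, C i.castSucc j ^ 2 ≤ 1 := fun i =>
    sum_sq_le_one_of_transpose_mul_self_eq_one hC i.castSucc
  calc (Cᵀ * diagonal (Fin.snoc β μ) * C * diagonal lam).trace
      = ∑ j, lam j * ∑ i : Fin n, β i * C i.castSucc j ^ 2 := by
        simp only [trace, diag_apply, mul_apply, transpose_apply, diagonal_apply, mul_ite,
          mul_zero, sum_ite_eq', mem_univ, if_true, Fin.sum_univ_castSucc, Fin.snoc_castSucc, hlast,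
          add_zero, mul_sum, sum_mul]
        exact sum_congr rfl fun j _ => sum_congr rfl fun i _ => by ring
    _ ≤ _ := sum_mul_sum_le_of_substochastic hdn hβ hlam hlam0 (fun i j => sq_nonneg _) hcol hrow

theorem Matrix.trace_transpose_mul_mul_mul_diagonal_le {n d : ℕ} (hdn : d ≤ n)
    {Q : Matrix (Fin (n + 1)) (Fin (n + 1)) ℝ} {u : Fin (n + 1) → ℝ} (hu : u ⬝ᵥ u = 1) {μ : ℝ}
    (hQu : Q *ᵥ u = μ • u) {w : Fin n → Fin (n + 1) → ℝ} {β : Fin n → ℝ}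
    (hw : ∀ i j, w i ⬝ᵥ w j = if i = j then 1 else 0) (hwu : ∀ i, w i ⬝ᵥ u = 0)
    (hQw : ∀ i, Q *ᵥ w i = β i • w i) (hβ : Antitone β) {lam : Fin d → ℝ}
    (hlam : Antitone lam) (hlam0 : ∀ j, 0 ≤ lam j) {X : Matrix (Fin (n + 1)) (Fin d) ℝ}
    (hX : Xᵀ * X = 1) (hXu : Xᵀ *ᵥ u = 0) :
    (Xᵀ * Q * X * diagonal lam).trace ≤ ∑ j, lam j * β (Fin.castLE hdn j) := by
  set W := (of (Fin.snoc (α := fun _ => Fin (n + 1) → ℝ) w u))ᵀ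
  have hW : Wᵀ * W = 1 := by
    rw [transpose_transpose]
    exact of_mul_transpose_eq_one_of_orthonormal (Fin.snoc_dotProduct_snoc_eq_ite hw hwu hu)
  have hWW : W * Wᵀ = 1 := mul_eq_one_comm.mp hW
  have hQW : Wᵀ * Q * W = diagonal (Fin.snoc β μ) :=
    transpose_mul_mul_eq_diagonal hW <| mul_transpose_of_eq_mul_diagonal fun i => by
      induction i using Fin.lastCases <;> simp [hQu, hQw]
  set C := Wᵀ * X
  have hC : Cᵀ * C = 1 := by
    simp only [C, transpose_mul, transpose_transpose, Matrix.mul_assoc, ← Matrix.mul_assoc W,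
      hWW, Matrix.one_mul, hX]
  have hlast : ∀ j, C (Fin.last n) j = 0 := fun j => by
    simpa [C, W, mul_apply, mulVec, dotProduct, mul_comm] using congrFun hXu j
  have hXQX : Xᵀ * Q * X = Cᵀ * diagonal (Fin.snoc β μ) * C := by
    rw [← hQW]
    simp only [C, transpose_mul, transpose_transpose, Matrix.mul_assoc, ← Matrix.mul_assoc W,
      hWW, Matrix.one_mul]
  rw [hXQX]
  exact trace_transpose_mul_diagonal_snoc_mul_le hdn hβ hlam hlam0 μ hC hlast

/-- The maximum of `tr(Xᵀ Q X Λ)` subject to `Xᵀ X = I_d` and `Xᵀ u = 0`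
is attained at the `d` top eigenvectors of `Q` excluding the unit eigenvector `u`.
The eigenvalues of the symmetric matrix `Q` after removing one occurrence of the
eigenvalue of `u` are described by an orthonormal family `w` of eigenvectors
orthogonal to `u`, with eigenvalues `β` ordered nonincreasingly. -/
theorem max_brockett_excluding_u (m d : ℕ) (hd : d + 1 ≤ m)
    (Q : Matrix (Fin m) (Fin m) ℝ)
    (u : Fin m → ℝ) (hu_unit : u ⬝ᵥ u = 1)
    (μ : ℝ) (hu_eig : Q *ᵥ u = μ • u)
    (w : Fin (m - 1) → (Fin m → ℝ)) (β : Fin (m - 1) → ℝ)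
    (hw_orth : ∀ i j : Fin (m - 1), w i ⬝ᵥ w j = if i = j then (1 : ℝ) else 0)
    (hw_u : ∀ i, w i ⬝ᵥ u = 0)
    (hw_eig : ∀ i, Q *ᵥ w i = β i • w i)
    (hβ_anti : ∀ i j : Fin (m - 1), i ≤ j → β j ≤ β i)
    (lam : Fin d → ℝ)
    (hlam_anti : ∀ i j : Fin d, i ≤ j → lam j ≤ lam i)
    (hlam_nonneg : ∀ j : Fin d, 0 ≤ lam j) :
    ∃ X₀ : Matrix (Fin m) (Fin d) ℝ,
      (∀ j : Fin d, (fun i => X₀ i j) = w (Fin.castLE (by omega) j)) ∧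
      X₀ᵀ * X₀ = 1 ∧ X₀ᵀ *ᵥ u = 0 ∧
      ∀ X : Matrix (Fin m) (Fin d) ℝ, Xᵀ * X = 1 → Xᵀ *ᵥ u = 0 →
        (Xᵀ * Q * X * Matrix.diagonal lam).trace ≤
          (X₀ᵀ * Q * X₀ * Matrix.diagonal lam).trace := by
  have hdm : d ≤ m - 1 := by omega
  set X₀ := (of fun j => w (Fin.castLE hdm j))ᵀ
  have hX₀ : X₀ᵀ * X₀ = 1 := by
    rw [transpose_transpose]
    exact of_mul_transpose_eq_one_of_orthonormal fun i j => by
      simpa [(Fin.castLE_injective hdm).eq_iff] using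
        hw_orth (Fin.castLE hdm i) (Fin.castLE hdm j)
  have hQX₀ : X₀ᵀ * Q * X₀ = diagonal fun j => β (Fin.castLE hdm j) :=
    transpose_mul_mul_eq_diagonal hX₀ (mul_transpose_of_eq_mul_diagonal fun j => hw_eig _)
  refine ⟨X₀, fun j => rfl, hX₀, funext fun j => hw_u _, fun X hX hXu => ?_⟩
  rw [hQX₀]
  obtain ⟨n, rfl⟩ : ∃ n, m = n + 1 := ⟨m - 1, by omega⟩
  calc _ ≤ ∑ j, lam j * β (Fin.castLE hdm j) :=
        trace_transpose_mul_mul_mul_diagonal_le hdm hu_unit hu_eig hw_orth hw_u hw_eig hβ_anti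
          hlam_anti hlam_nonneg hX hXu
    _ = _ := by simp [trace, mul_comm]
end

section
/- Let B ∈ ℝ^{l×m} be such that B Bᵀ is invertible, let Z ∈ ℝ^{r×l}, let μ ≥ 0, and define Q = Bᵀ (B Bᵀ + μ Zᵀ Z)⁻¹ B. Then Q 𝟏 = 𝟏 if and only if there exists x ∈ ℝ^l such that Bᵀ x = 𝟏 and, if μ > 0, additionally Z x = 0. -/
/-!
`M = B Bᵀ + μ Zᵀ Z` is positive definite, hence invertible, and `Q 𝟏 = 𝟏` says exactly that
`x = M⁻¹ B 𝟏` satisfies `Bᵀ x = 𝟏`. For any `x` with `Bᵀ x = 𝟏` the equation `M x = B 𝟏`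
reduces to `μ Zᵀ Z x = 0`, i.e. to `μ = 0` or `Z x = 0`.
-/

open Matrix

namespace Matrix

variable {l m n R : Type*} [Fintype l] [Fintype m] [Fintype n]

theorem mulVec_eq_iff_eq_inv_mulVec [DecidableEq n] [CommRing R] {M : Matrix n n R}
    (hM : IsUnit M) (x y : n → R) : M *ᵥ x = y ↔ x = M⁻¹ *ᵥ y := by
  have hdet := (isUnit_iff_isUnit_det M).mp hM
  constructor
  · rintro rfl
    rw [mulVec_mulVec, nonsing_inv_mul _ hdet, one_mulVec]
  · rintro rfl
    rw [mulVec_mulVec, mul_nonsing_inv _ hdet, one_mulVec]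

theorem mul_inv_mul_mulVec_eq_self_iff [DecidableEq n] [CommRing R] (A : Matrix m n R)
    {M : Matrix n n R} (hM : IsUnit M) (C : Matrix n m R) (v : m → R) :
    (A * M⁻¹ * C) *ᵥ v = v ↔ ∃ x, A *ᵥ x = v ∧ M *ᵥ x = C *ᵥ v := by
  simp_rw [mulVec_eq_iff_eq_inv_mulVec hM, exists_eq_right, mulVec_mulVec, Matrix.mul_assoc]

theorem transpose_mul_self_mulVec_eq_zero (A : Matrix m n ℝ) (v : n → ℝ) :
    (Aᵀ * A) *ᵥ v = 0 ↔ A *ᵥ v = 0 := by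
  simpa only [conjTranspose_eq_transpose_of_trivial] using
    conjTranspose_mul_self_mulVec_eq_zero A v

theorem posDef_mul_transpose_add_smul_transpose_mul [DecidableEq l] (B : Matrix l m ℝ)
    (Z : Matrix n l ℝ) {μ : ℝ} (hμ : 0 ≤ μ) (hB : IsUnit (B * Bᵀ)) :
    (B * Bᵀ + μ • (Zᵀ * Z)).PosDef := by
  simp only [← conjTranspose_eq_transpose_of_trivial] at hB ⊢
  exact ((posSemidef_self_mul_conjTranspose B).posDef_iff_isUnit.mpr hB).add_posSemidef
    ((posSemidef_conjTranspose_mul_self Z).smul hμ)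

theorem mul_transpose_add_smul_mulVec_eq_iff {B : Matrix l m ℝ} (Z : Matrix n l ℝ) {μ : ℝ}
    (hμ : 0 ≤ μ) {x : l → ℝ} {v : m → ℝ} (hx : Bᵀ *ᵥ x = v) :
    (B * Bᵀ + μ • (Zᵀ * Z)) *ᵥ x = B *ᵥ v ↔ (0 < μ → Z *ᵥ x = 0) := by
  rw [add_mulVec, ← mulVec_mulVec, hx, add_eq_left, smul_mulVec, smul_eq_zero,
    transpose_mul_self_mulVec_eq_zero, ← hμ.not_lt_iff_eq', imp_iff_not_or]

end Matrix

/-- With `Q = Bᵀ (B Bᵀ + μ Zᵀ Z)⁻¹ B`, `B Bᵀ` invertible and `μ ≥ 0`,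
`Q 𝟏 = 𝟏` if and only if there exists `x` with `Bᵀ x = 𝟏` and, if `μ > 0`,
additionally `Z x = 0`. -/
theorem warp_fixes_ones_iff (l m r : ℕ)
    (B : Matrix (Fin l) (Fin m) ℝ) (Z : Matrix (Fin r) (Fin l) ℝ)
    (μ : ℝ) (hμ : 0 ≤ μ) (hB : IsUnit (B * Bᵀ)) :
    (Bᵀ * (B * Bᵀ + μ • (Zᵀ * Z))⁻¹ * B) *ᵥ (fun _ => (1 : ℝ)) = (fun _ => (1 : ℝ)) ↔
    ∃ x : Fin l → ℝ, Bᵀ *ᵥ x = (fun _ => (1 : ℝ)) ∧ (0 < μ → Z *ᵥ x = 0) := by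
  have hM := (posDef_mul_transpose_add_smul_transpose_mul B Z hμ hB).isUnit
  rw [mul_inv_mul_mulVec_eq_self_iff _ hM]
  exact exists_congr fun x => and_congr_right fun hx =>
    mul_transpose_add_smul_mulVec_eq_iff Z hμ hx
end

section
/- For i = 1, …, n let B_i ∈ ℝ^{l_i×m} be such that B_i B_iᵀ is invertible, let Z_i ∈ ℝ^{r_i×l_i}, and let μ_i ≥ 0. Define Q_i = B_iᵀ (B_i B_iᵀ + μ_i Z_iᵀ Z_i)⁻¹ B_i, Q = ∑_{i=1}^{n} Q_i, and P = ∑_{i=1}^{n} (I_m − Q_i). Then the following statements are equivalent: (a) P 𝟏 = 0; (b) Q 𝟏 = n 𝟏; (c) Q_i 𝟏 = 𝟏 for every i; (d) the cost function S ↦ tr(S P Sᵀ) is invariant to translations, i.e. for every S ∈ ℝ^{d×m} and every t ∈ ℝ^d, tr((S + t 𝟏ᵀ) P (S + t 𝟏ᵀ)ᵀ) = tr(S P Sᵀ); (e) for every i there exists x ∈ ℝ^{l_i} such that B_iᵀ x = 𝟏 and, if μ_i > 0, additionally Z_i x = 0. -/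
/-!
Let `A = B Bᵀ + μ Zᵀ Z`, which is positive definite, and `y = A⁻¹ B x`, so that `Q x = Bᵀ y`.
Completing the square gives `xᵀ (I - Q) x = ‖x - Bᵀ y‖² + μ ‖Z y‖²`, so each `I - Qᵢ` is
positive semidefinite and `P = ∑ (I - Qᵢ)` kills `𝟏` iff every `I - Qᵢ` does. By the identity,
`Qᵢ 𝟏 = 𝟏` makes `yᵢ` a witness for (e); conversely a witness `x` for (e) satisfies `A x = B 𝟏`,
so `x = yᵢ` and `Qᵢ 𝟏 = Bᵢᵀ x = 𝟏`. As `P` is symmetric, `P 𝟏 = 0` makes the cost translation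
invariant, and translating `S = 0` by `t = 1` costs `𝟏ᵀ P 𝟏`.
-/

open Matrix

/-- The regularized projection matrix `Q = Bᵀ (B Bᵀ + μ Zᵀ Z)⁻¹ B` of a linear basis
warp with feature matrix `B`, regularization matrix `Z` and smoothing parameter `μ`. -/
noncomputable def warpQ {l m r : ℕ} (B : Matrix (Fin l) (Fin m) ℝ)
    (Z : Matrix (Fin r) (Fin l) ℝ) (μ : ℝ) : Matrix (Fin m) (Fin m) ℝ :=
  Bᵀ * (B * Bᵀ + μ • (Zᵀ * Z))⁻¹ * B

namespace Matrix

theorem dotProduct_self_nonneg {R n : Type*} [Fintype n] [Ring R] [LinearOrder R]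
    [IsStrictOrderedRing R] (v : n → R) : 0 ≤ v ⬝ᵥ v :=
  Finset.sum_nonneg fun i _ => mul_self_nonneg (v i)

open scoped ComplexOrder

theorem PosSemidef.sum_mulVec_eq_zero_iff {𝕜 ι n : Type*} [RCLike 𝕜] [Fintype n] [Fintype ι]
    {A : ι → Matrix n n 𝕜} (hA : ∀ i, (A i).PosSemidef) (x : n → 𝕜) :
    (∑ i, A i) *ᵥ x = 0 ↔ ∀ i, A i *ᵥ x = 0 := by
  rw [← (posSemidef_sum _ fun i _ => hA i).dotProduct_mulVec_zero_iff, sum_mulVec,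
    dotProduct_sum, Finset.sum_eq_zero_iff_of_nonneg fun i _ => (hA i).dotProduct_mulVec_nonneg x]
  simp only [Finset.mem_univ, true_implies, (hA _).dotProduct_mulVec_zero_iff]

theorem IsSymm.add_vecMulVec_mul_mul_transpose {α m n : Type*} [CommRing α]
    [Fintype n] {P : Matrix n n α} (hP : P.IsSymm) {v : n → α} (hv : P *ᵥ v = 0)
    (S : Matrix m n α) (t : m → α) :
    (S + vecMulVec t v) * P * (S + vecMulVec t v)ᵀ = S * P * Sᵀ := by
  have hvP : vecMulVec t v * P = 0 := by
    ext i j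
    rw [vecMulVec_mul, ← mulVec_transpose, hP.eq, hv, vecMulVec_apply, Pi.zero_apply, mul_zero,
      zero_apply]
  rw [transpose_add, transpose_vecMulVec, Matrix.add_mul, hvP, add_zero, Matrix.mul_add,
    mul_vecMulVec, ← mulVec_mulVec, hv, mulVec_zero, zero_vecMulVec, add_zero]

theorem trace_vecMulVec_mul_mul_transpose {α m n : Type*} [CommRing α] [Fintype m] [Fintype n]
    (P : Matrix n n α) (t : m → α) (v : n → α) :
    (vecMulVec t v * P * (vecMulVec t v)ᵀ).trace = (t ⬝ᵥ t) * (v ⬝ᵥ P *ᵥ v) := by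
  rw [transpose_vecMulVec, vecMulVec_mul, vecMulVec_mul_vecMulVec, trace_vecMulVec,
    dotProduct_smul, smul_eq_mul, ← dotProduct_mulVec, dotProduct_comm t]
  ring

end Matrix

section Warp

variable {l m r : ℕ} (B : Matrix (Fin l) (Fin m) ℝ) (Z : Matrix (Fin r) (Fin l) ℝ) (μ : ℝ)

noncomputable def warpGram : Matrix (Fin l) (Fin l) ℝ := B * Bᵀ + μ • (Zᵀ * Z)

theorem warpQ_eq : warpQ B Z μ = Bᵀ * (warpGram B Z μ)⁻¹ * B := rfl

theorem warpGram_transpose : (warpGram B Z μ)ᵀ = warpGram B Z μ := by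
  simp [warpGram, transpose_add, transpose_mul, transpose_smul]

theorem warpQ_transpose : (warpQ B Z μ)ᵀ = warpQ B Z μ := by
  rw [warpQ_eq, transpose_mul, transpose_mul, transpose_transpose, transpose_nonsing_inv,
    warpGram_transpose, Matrix.mul_assoc]

theorem posDef_warpGram (hμ : 0 ≤ μ) (hB : IsUnit (B * Bᵀ)) : (warpGram B Z μ).PosDef := by
  have hBB : (B * Bᵀ).PosDef := by
    simpa [conjTranspose_eq_transpose_of_trivial] using
      (posSemidef_self_mul_conjTranspose B).posDef_iff_isUnit.mpr (by simpa using hB)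
  have hZZ : (Zᵀ * Z).PosSemidef := by
    simpa [conjTranspose_eq_transpose_of_trivial] using posSemidef_conjTranspose_mul_self Z
  exact hBB.add_posSemidef (hZZ.smul hμ)

theorem dotProduct_warpGram_mulVec (y : Fin l → ℝ) :
    y ⬝ᵥ warpGram B Z μ *ᵥ y = (Bᵀ *ᵥ y) ⬝ᵥ (Bᵀ *ᵥ y) + μ * ((Z *ᵥ y) ⬝ᵥ (Z *ᵥ y)) := by
  rw [warpGram, add_mulVec, dotProduct_add, smul_mulVec, dotProduct_smul, smul_eq_mul,
    ← mulVec_mulVec, ← mulVec_mulVec, dotProduct_mulVec y B, dotProduct_mulVec y Zᵀ,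
    ← mulVec_transpose, vecMul_transpose]

theorem dotProduct_one_sub_warpQ_mulVec (hA : IsUnit (warpGram B Z μ).det) {x : Fin m → ℝ}
    {y : Fin l → ℝ} (hy : (warpGram B Z μ)⁻¹ *ᵥ B *ᵥ x = y) :
    x ⬝ᵥ (1 - warpQ B Z μ) *ᵥ x =
      (x - Bᵀ *ᵥ y) ⬝ᵥ (x - Bᵀ *ᵥ y) + μ * ((Z *ᵥ y) ⬝ᵥ (Z *ᵥ y)) := by
  have hQx : warpQ B Z μ *ᵥ x = Bᵀ *ᵥ y := by
    rw [warpQ_eq, ← mulVec_mulVec, ← mulVec_mulVec, hy]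
  have hAy : warpGram B Z μ *ᵥ y = B *ᵥ x := by
    rw [← hy, mulVec_mulVec, mul_nonsing_inv _ hA, one_mulVec]
  have hq : (Bᵀ *ᵥ y) ⬝ᵥ (Bᵀ *ᵥ y) + μ * ((Z *ᵥ y) ⬝ᵥ (Z *ᵥ y)) = x ⬝ᵥ Bᵀ *ᵥ y := by
    rw [← dotProduct_warpGram_mulVec, hAy, dotProduct_mulVec x, vecMul_transpose, dotProduct_comm]
  rw [sub_mulVec, one_mulVec, hQx, dotProduct_sub, sub_dotProduct, dotProduct_sub, dotProduct_sub,
    dotProduct_comm (Bᵀ *ᵥ y) x]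
  linarith

theorem posSemidef_one_sub_warpQ (hμ : 0 ≤ μ) (hB : IsUnit (B * Bᵀ)) :
    (1 - warpQ B Z μ).PosSemidef := by
  refine .of_dotProduct_mulVec_nonneg ?_ fun x => ?_
  · simp [IsSymm, transpose_sub, warpQ_transpose]
  · rw [star_trivial, dotProduct_one_sub_warpQ_mulVec B Z μ
      ((isUnit_iff_isUnit_det _).mp (posDef_warpGram B Z μ hμ hB).isUnit) rfl]
    exact add_nonneg (dotProduct_self_nonneg _) (mul_nonneg hμ (dotProduct_self_nonneg _))

theorem warpQ_mulVec_eq_self_iff (hμ : 0 ≤ μ) (hB : IsUnit (B * Bᵀ)) (x : Fin m → ℝ) :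
    warpQ B Z μ *ᵥ x = x ↔ ∃ w, Bᵀ *ᵥ w = x ∧ (0 < μ → Z *ᵥ w = 0) := by
  have hA := (isUnit_iff_isUnit_det _).mp (posDef_warpGram B Z μ hμ hB).isUnit
  constructor
  · intro hx
    set y := (warpGram B Z μ)⁻¹ *ᵥ B *ᵥ x with hy
    have h0 : x ⬝ᵥ (1 - warpQ B Z μ) *ᵥ x = 0 := by
      rw [sub_mulVec, one_mulVec, hx, sub_self, dotProduct_zero]
    rw [dotProduct_one_sub_warpQ_mulVec B Z μ hA hy.symm] at h0
    have hres := dotProduct_self_nonneg (x - Bᵀ *ᵥ y)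
    have hpen := mul_nonneg hμ (dotProduct_self_nonneg (Z *ᵥ y))
    refine ⟨y, (sub_eq_zero.mp (dotProduct_self_eq_zero.mp (by linarith))).symm, fun hμpos => ?_⟩
    exact dotProduct_self_eq_zero.mp
      ((mul_eq_zero.mp (by linarith : μ * _ = 0)).resolve_left hμpos.ne')
  · rintro ⟨w, rfl, hZw⟩
    have hAw : warpGram B Z μ *ᵥ w = B *ᵥ Bᵀ *ᵥ w := by
      have hreg : μ • (Zᵀ *ᵥ Z *ᵥ w) = 0 := by
        rcases hμ.eq_or_lt with rfl | hpos
        · exact zero_smul _ _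
        · rw [hZw hpos, mulVec_zero, smul_zero]
      rw [warpGram, add_mulVec, smul_mulVec, ← mulVec_mulVec, ← mulVec_mulVec, hreg, add_zero]
    rw [warpQ_eq, ← mulVec_mulVec, ← hAw, mulVec_mulVec, Matrix.mul_assoc, nonsing_inv_mul _ hA,
      Matrix.mul_one]

end Warp

/-- equivalence of (a) `P 𝟏 = 0`, (b) `Q 𝟏 = n 𝟏`, (c) `Qᵢ 𝟏 = 𝟏` for
every `i`, (d) translation invariance of `S ↦ tr(S P Sᵀ)`, and (e) the existence,
for every `i`, of `x` with `Bᵢᵀ x = 𝟏` and (`Zᵢ x = 0` if `μᵢ > 0`). -/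
theorem warp_all_ones_tfae (n m : ℕ) (l r : Fin n → ℕ)
    (B : ∀ i, Matrix (Fin (l i)) (Fin m) ℝ)
    (Z : ∀ i, Matrix (Fin (r i)) (Fin (l i)) ℝ)
    (μ : Fin n → ℝ) (hμ : ∀ i, 0 ≤ μ i)
    (hB : ∀ i, IsUnit (B i * (B i)ᵀ)) :
    ((∑ i, ((1 : Matrix (Fin m) (Fin m) ℝ) - warpQ (B i) (Z i) (μ i))) *ᵥ
        (fun _ => (1 : ℝ)) = 0 ↔
      (∑ i, warpQ (B i) (Z i) (μ i)) *ᵥ (fun _ => (1 : ℝ)) =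
        (n : ℝ) • (fun _ => (1 : ℝ))) ∧
    ((∑ i, ((1 : Matrix (Fin m) (Fin m) ℝ) - warpQ (B i) (Z i) (μ i))) *ᵥ
        (fun _ => (1 : ℝ)) = 0 ↔
      ∀ i, warpQ (B i) (Z i) (μ i) *ᵥ (fun _ => (1 : ℝ)) = (fun _ => (1 : ℝ))) ∧
    ((∑ i, ((1 : Matrix (Fin m) (Fin m) ℝ) - warpQ (B i) (Z i) (μ i))) *ᵥ
        (fun _ => (1 : ℝ)) = 0 ↔
      ∀ (d : ℕ) (S : Matrix (Fin d) (Fin m) ℝ) (t : Fin d → ℝ),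
        ((S + vecMulVec t (fun _ => 1)) *
            (∑ i, ((1 : Matrix (Fin m) (Fin m) ℝ) - warpQ (B i) (Z i) (μ i))) *
            (S + vecMulVec t (fun _ => 1))ᵀ).trace =
          (S * (∑ i, ((1 : Matrix (Fin m) (Fin m) ℝ) - warpQ (B i) (Z i) (μ i))) *
            Sᵀ).trace) ∧
    ((∑ i, ((1 : Matrix (Fin m) (Fin m) ℝ) - warpQ (B i) (Z i) (μ i))) *ᵥ
        (fun _ => (1 : ℝ)) = 0 ↔
      ∀ i, ∃ x : Fin (l i) → ℝ,
        (B i)ᵀ *ᵥ x = (fun _ => (1 : ℝ)) ∧ (0 < μ i → Z i *ᵥ x = 0)) := by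
  set u : Fin m → ℝ := fun _ => 1
  set P := ∑ i, ((1 : Matrix (Fin m) (Fin m) ℝ) - warpQ (B i) (Z i) (μ i))
  have hPSD i : (1 - warpQ (B i) (Z i) (μ i)).PosSemidef :=
    posSemidef_one_sub_warpQ _ _ _ (hμ i) (hB i)
  have hP : P.PosSemidef := posSemidef_sum _ fun i _ => hPSD i
  have hac : P *ᵥ u = 0 ↔ ∀ i, warpQ (B i) (Z i) (μ i) *ᵥ u = u := by
    refine (PosSemidef.sum_mulVec_eq_zero_iff hPSD u).trans (forall_congr' fun i => ?_)
    rw [sub_mulVec, one_mulVec, sub_eq_zero, eq_comm]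
  refine ⟨?_, hac, ⟨fun hu d S t => ?_, fun h => ?_⟩,
    hac.trans (forall_congr' fun i => warpQ_mulVec_eq_self_iff _ _ _ (hμ i) (hB i) u)⟩
  · have hPu : P *ᵥ u = (n : ℝ) • u - (∑ i, warpQ (B i) (Z i) (μ i)) *ᵥ u := by
      simp [P, sum_mulVec, sub_mulVec, Finset.sum_sub_distrib]
    rw [hPu, sub_eq_zero, eq_comm]
  · rw [(isHermitian_iff_isSymm.mp hP.isHermitian).add_vecMulVec_mul_mul_transpose hu]
  · have h0 := h 1 0 (fun _ => 1)
    rw [zero_add, trace_vecMulVec_mul_mul_transpose, Matrix.zero_mul, Matrix.zero_mul,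
      trace_zero] at h0
    rw [← hP.dotProduct_mulVec_zero_iff, star_trivial]
    exact (mul_eq_zero.mp h0).resolve_left (by simp [dotProduct])
end

section
/- For i = 1, …, n let Γ_i ∈ ℝ^{m×m} be diagonal matrices with all diagonal entries in {0,1}, let B_i ∈ ℝ^{l_i×m}, Z_i ∈ ℝ^{r_i×l_i}, and μ_i ≥ 0 be such that B_i Γ_i B_iᵀ + μ_i Z_iᵀ Z_i is invertible. Define P_i = Γ_i − Γ_i B_iᵀ (B_i Γ_i B_iᵀ + μ_i Z_iᵀ Z_i)⁻¹ B_i Γ_i and P = ∑_{i=1}^{n} P_i. Then each P_i is positive semidefinite, and the following statements are equivalent: (a) P 𝟏 = 0; (b) P_i 𝟏 = 0 for every i; (c) for every i there exists x ∈ ℝ^{l_i} such that Γ_i B_iᵀ x = Γ_i 𝟏 and, if μ_i > 0, additionally Z_i x = 0. -/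
/-!
With `Γ = diagonal γ` idempotent and `M = B Γ Bᵀ + μ Zᵀ Z`, the matrix `P = partialP γ B Z μ`
satisfies `P = Pᵀ P + μ Sᵀ S` for `S = Z M⁻¹ B Γ`. Hence `P` is positive semidefinite, and
`P v = 0` forces `S v = 0` when `μ > 0`, so that `x = M⁻¹ B Γ v` solves `Γ Bᵀ x = Γ v`,
`Z x = 0`. Conversely, any such `x` satisfies `M x = B Γ v`, hence equals `M⁻¹ B Γ v`, and then
`P v = Γ v - Γ Bᵀ x = 0`. Finally, the kernel of a sum of positive semidefinite matrices is the
intersection of their kernels.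
-/

open Matrix

/-- The partial-shape matrix
`P = Γ − Γ Bᵀ (B Γ Bᵀ + μ Zᵀ Z)⁻¹ B Γ` of a linear basis warp with visibility
matrix `Γ = diagonal γ`, feature matrix `B`, regularization matrix `Z` and
smoothing parameter `μ`. -/
noncomputable def partialP {l m r : ℕ} (γ : Fin m → ℝ)
    (B : Matrix (Fin l) (Fin m) ℝ) (Z : Matrix (Fin r) (Fin l) ℝ) (μ : ℝ) :
    Matrix (Fin m) (Fin m) ℝ :=
  Matrix.diagonal γ -
    Matrix.diagonal γ * Bᵀ *
      (B * Matrix.diagonal γ * Bᵀ + μ • (Zᵀ * Z))⁻¹ * B * Matrix.diagonal γ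

namespace Matrix.PosSemidef

open scoped ComplexOrder

variable {n 𝕜 : Type*} [Fintype n] [RCLike 𝕜]

theorem add_mulVec_eq_zero_iff {A B : Matrix n n 𝕜} (hA : A.PosSemidef) (hB : B.PosSemidef)
    (x : n → 𝕜) : (A + B) *ᵥ x = 0 ↔ A *ᵥ x = 0 ∧ B *ᵥ x = 0 := by
  rw [← (hA.add hB).dotProduct_mulVec_zero_iff, ← hA.dotProduct_mulVec_zero_iff,
    ← hB.dotProduct_mulVec_zero_iff, add_mulVec, dotProduct_add,
    add_eq_zero_iff_of_nonneg (hA.dotProduct_mulVec_nonneg x) (hB.dotProduct_mulVec_nonneg x)]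

theorem sum_mulVec_eq_zero_iff_s10 {ι : Type*} {s : Finset ι} {A : ι → Matrix n n 𝕜}
    (hA : ∀ i ∈ s, (A i).PosSemidef) (x : n → 𝕜) :
    (∑ i ∈ s, A i) *ᵥ x = 0 ↔ ∀ i ∈ s, A i *ᵥ x = 0 := by
  rw [← (posSemidef_sum s hA).dotProduct_mulVec_zero_iff, sum_mulVec, dotProduct_sum,
    Finset.sum_eq_zero_iff_of_nonneg fun i hi => (hA i hi).dotProduct_mulVec_nonneg x]
  exact forall₂_congr fun i hi => (hA i hi).dotProduct_mulVec_zero_iff x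

end Matrix.PosSemidef

theorem Matrix.diagonal_mul_self_of_zero_or_one {n R : Type*} [Fintype n] [DecidableEq n]
    [Semiring R] {d : n → R} (hd : ∀ j, d j = 0 ∨ d j = 1) : diagonal d * diagonal d = diagonal d := by
  rw [diagonal_mul_diagonal]
  congr 1
  funext j
  rcases hd j with h | h <;> simp [h]

section PartialShape

variable {l m r : ℕ} (γ : Fin m → ℝ) (B : Matrix (Fin l) (Fin m) ℝ)
  (Z : Matrix (Fin r) (Fin l) ℝ) (μ : ℝ)

local notation "Γ" => diagonal γ
local notation "M" => B * diagonal γ * Bᵀ + μ • (Zᵀ * Z)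

theorem partialP_transpose : (partialP γ B Z μ)ᵀ = partialP γ B Z μ := by
  simp only [partialP, transpose_sub, transpose_mul, transpose_nonsing_inv, transpose_add,
    transpose_smul, diagonal_transpose, transpose_transpose, Matrix.mul_assoc]

theorem partialP_eq_conjTranspose_mul_self_add (hγ : ∀ j, γ j = 0 ∨ γ j = 1) (hinv : IsUnit M) :
    partialP γ B Z μ = (partialP γ B Z μ)ᴴ * partialP γ B Z μ +
      μ • ((Z * (M)⁻¹ * B * Γ)ᴴ * (Z * (M)⁻¹ * B * Γ)) := by
  simp only [conjTranspose_eq_transpose_of_trivial]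
  set N := (M)⁻¹ with hN
  have hΓ := diagonal_mul_self_of_zero_or_one hγ
  have hNM : N * M = 1 := nonsing_inv_mul _ ((isUnit_iff_isUnit_det _).mp hinv)
  have hNT : Nᵀ = N := by
    rw [hN, transpose_nonsing_inv]
    simp only [transpose_add, transpose_mul, transpose_smul, transpose_transpose,
      diagonal_transpose, Matrix.mul_assoc]
  set K := Γ * Bᵀ * N * B * Γ with hK
  have hP : partialP γ B Z μ = Γ - K := rfl
  have hΓK : Γ * K = K := by simp only [hK, ← Matrix.mul_assoc, hΓ]
  have hKΓ : K * Γ = K := by simp only [hK, Matrix.mul_assoc, hΓ]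
  have hKK : K * K + μ • ((Z * N * B * Γ)ᵀ * (Z * N * B * Γ)) = K := by
    calc K * K + μ • ((Z * N * B * Γ)ᵀ * (Z * N * B * Γ))
        = Γ * Bᵀ * (N * M) * N * B * Γ := by
          simp only [hK, transpose_mul, hNT, diagonal_transpose, Matrix.mul_add, Matrix.add_mul,
            Matrix.mul_smul, Matrix.smul_mul, Matrix.mul_assoc]
          rw [← Matrix.mul_assoc Γ Γ, hΓ]
      _ = K := by rw [hNM, Matrix.mul_one]
  rw [partialP_transpose, hP]
  calc Γ - K = (Γ * Γ - Γ * K - K * Γ) + (K * K + μ • ((Z * N * B * Γ)ᵀ * (Z * N * B * Γ))) := by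
        rw [hKK, hΓ, hΓK, hKΓ]; abel
    _ = _ := by rw [Matrix.sub_mul, Matrix.mul_sub, Matrix.mul_sub]; abel

theorem posSemidef_partialP (hγ : ∀ j, γ j = 0 ∨ γ j = 1) (hμ : 0 ≤ μ) (hinv : IsUnit M) :
    (partialP γ B Z μ).PosSemidef := by
  rw [partialP_eq_conjTranspose_mul_self_add γ B Z μ hγ hinv]
  exact (posSemidef_conjTranspose_mul_self _).add ((posSemidef_conjTranspose_mul_self _).smul hμ)

theorem partialP_mulVec (v : Fin m → ℝ) :
    partialP γ B Z μ *ᵥ v = Γ *ᵥ v - (Γ * Bᵀ) *ᵥ ((M)⁻¹ *ᵥ (B *ᵥ (Γ *ᵥ v))) := by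
  simp only [partialP, sub_mulVec, mulVec_mulVec, Matrix.mul_assoc]

theorem partialP_mulVec_eq_zero_iff (hγ : ∀ j, γ j = 0 ∨ γ j = 1) (hμ : 0 ≤ μ) (hinv : IsUnit M)
    (v : Fin m → ℝ) :
    partialP γ B Z μ *ᵥ v = 0 ↔
      ∃ x : Fin l → ℝ, (Γ * Bᵀ) *ᵥ x = Γ *ᵥ v ∧ (0 < μ → Z *ᵥ x = 0) := by
  constructor
  · intro hP
    refine ⟨_, (sub_eq_zero.mp ((partialP_mulVec γ B Z μ v).symm.trans hP)).symm, fun hμpos => ?_⟩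
    rw [partialP_eq_conjTranspose_mul_self_add γ B Z μ hγ hinv,
      PosSemidef.add_mulVec_eq_zero_iff (posSemidef_conjTranspose_mul_self _)
        ((posSemidef_conjTranspose_mul_self _).smul hμ),
      smul_mulVec, smul_eq_zero] at hP
    simpa only [mulVec_mulVec, Matrix.mul_assoc] using
      (conjTranspose_mul_self_mulVec_eq_zero _ _).mp (hP.2.resolve_left hμpos.ne')
  · rintro ⟨x, hx, hZx⟩
    have hμZ : (μ • (Zᵀ * Z)) *ᵥ x = 0 := by
      rcases hμ.eq_or_lt with hμ0 | hμpos
      · rw [← hμ0, zero_smul, zero_mulVec]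
      · rw [smul_mulVec, ← mulVec_mulVec, hZx hμpos, mulVec_zero, smul_zero]
    have hMx : M *ᵥ x = B *ᵥ (Γ *ᵥ v) := by
      rw [add_mulVec, hμZ, add_zero, Matrix.mul_assoc, ← mulVec_mulVec, hx]
    have hx_eq : (M)⁻¹ *ᵥ (B *ᵥ (Γ *ᵥ v)) = x := by
      rw [← hMx, mulVec_mulVec, nonsing_inv_mul _ ((isUnit_iff_isUnit_det _).mp hinv), one_mulVec]
    rw [partialP_mulVec, hx_eq, hx, sub_self]

end PartialShape

/-- each `Pᵢ` is positive semidefinite, and (a) `P 𝟏 = 0`,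
(b) `Pᵢ 𝟏 = 0` for every `i`, and (c) for every `i` there exists `x` with
`Γᵢ Bᵢᵀ x = Γᵢ 𝟏` and (`Zᵢ x = 0` if `μᵢ > 0`), are equivalent. -/
theorem partial_warp_all_ones_tfae (n m : ℕ) (l r : Fin n → ℕ)
    (γ : Fin n → Fin m → ℝ) (hγ : ∀ i j, γ i j = 0 ∨ γ i j = 1)
    (B : ∀ i, Matrix (Fin (l i)) (Fin m) ℝ)
    (Z : ∀ i, Matrix (Fin (r i)) (Fin (l i)) ℝ)
    (μ : Fin n → ℝ) (hμ : ∀ i, 0 ≤ μ i)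
    (hinv : ∀ i, IsUnit (B i * Matrix.diagonal (γ i) * (B i)ᵀ + μ i • ((Z i)ᵀ * Z i))) :
    (∀ i, (partialP (γ i) (B i) (Z i) (μ i)).PosSemidef) ∧
    ((∑ i, partialP (γ i) (B i) (Z i) (μ i)) *ᵥ (fun _ => (1 : ℝ)) = 0 ↔
      ∀ i, partialP (γ i) (B i) (Z i) (μ i) *ᵥ (fun _ => (1 : ℝ)) = 0) ∧
    ((∑ i, partialP (γ i) (B i) (Z i) (μ i)) *ᵥ (fun _ => (1 : ℝ)) = 0 ↔
      ∀ i, ∃ x : Fin (l i) → ℝ,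
        (Matrix.diagonal (γ i) * (B i)ᵀ) *ᵥ x =
          Matrix.diagonal (γ i) *ᵥ (fun _ => (1 : ℝ)) ∧
        (0 < μ i → Z i *ᵥ x = 0)) := by
  have hpsd i := posSemidef_partialP (γ i) (B i) (Z i) (μ i) (hγ i) (hμ i) (hinv i)
  have hab : (∑ i, partialP (γ i) (B i) (Z i) (μ i)) *ᵥ (fun _ => (1 : ℝ)) = 0 ↔
      ∀ i, partialP (γ i) (B i) (Z i) (μ i) *ᵥ (fun _ => (1 : ℝ)) = 0 := by
    simpa only [Finset.mem_univ, forall_const] using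
      PosSemidef.sum_mulVec_eq_zero_iff_s10 (s := Finset.univ) (fun i _ => hpsd i) fun _ => (1 : ℝ)
  exact ⟨hpsd, hab, hab.trans <| forall_congr' fun i =>
    partialP_mulVec_eq_zero_iff (γ i) (B i) (Z i) (μ i) (hγ i) (hμ i) (hinv i) _⟩
end

section
/- Let Γ ∈ ℝ^{m×m} be a diagonal matrix with all diagonal entries in {0,1}, let B ∈ ℝ^{l×m}, Z ∈ ℝ^{r×l}, and μ ≥ 0 be such that B Γ Bᵀ + μ Zᵀ Z is invertible, and define P = Γ − Γ Bᵀ (B Γ Bᵀ + μ Zᵀ Z)⁻¹ B Γ. Then O ⪯ P ⪯ Γ ⪯ I_m. Consequently, for n such matrices P₁, …, P_n (with Γ_i, B_i, Z_i, μ_i respectively), the sum satisfies O ⪯ ∑_{i=1}^{n} P_i ⪯ n I_m. -/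
open Matrix

/-!
With `K = B Γ`, the identities `Γ² = Γ = Γᵀ` give `M := B Γ Bᵀ + μ Zᵀ Z = K Kᵀ + μ Zᵀ Z ⪰ K Kᵀ`,
and `M` is positive definite being positive semidefinite and invertible. The two Schur complements
of `[[M, K], [Kᵀ, I]]` turn `M - K Kᵀ ⪰ 0` into `I - Kᵀ M⁻¹ K ⪰ 0`; conjugating by `Γ` gives
`Γ - P = Kᵀ M⁻¹ K ⪯ Γ`, i.e. `P ⪰ 0`, while `Kᵀ M⁻¹ K ⪰ 0` gives `P ⪯ Γ`. An orthogonal projection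
satisfies `Γ ⪯ I`, and summing `Pᵢ ⪯ I` gives `∑ Pᵢ ⪯ n I`.
-/

open scoped ComplexOrder MatrixOrder

variable {𝕜 : Type*} [RCLike 𝕜] {l m : Type*} [Fintype m]

namespace Matrix

theorem isStarProjection_diagonal [DecidableEq m] {R : Type*} [Semiring R] [StarRing R]
    {d : m → R} (hd : ∀ i, IsStarProjection (d i)) : IsStarProjection (diagonal d) where
  isIdempotentElem := by
    rw [IsIdempotentElem, diagonal_mul_diagonal]
    exact congrArg diagonal (funext fun i => (hd i).isIdempotentElem)
  isSelfAdjoint := by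
    rw [IsSelfAdjoint, star_eq_conjTranspose, diagonal_conjTranspose]
    exact congrArg diagonal (funext fun i => (hd i).isSelfAdjoint)

theorem conjTranspose_mul_inv_mul_le_one [Fintype l] [DecidableEq l] [DecidableEq m]
    {K : Matrix l m 𝕜} {N : Matrix l l 𝕜} (hN : 0 ≤ N) (hM : IsUnit (K * Kᴴ + N)) : Kᴴ * (K * Kᴴ + N)⁻¹ * K ≤ 1 := by
  have hMpd : (K * Kᴴ + N).PosDef :=
    (posSemidef_self_mul_conjTranspose K |>.add hN.posSemidef).posDef_iff_isUnit.mpr hM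
  have := hM.invertible
  have : Invertible (1 : Matrix m m 𝕜) := invertibleOne
  have hblock : (fromBlocks (K * Kᴴ + N) K Kᴴ 1).PosSemidef :=
    (PosDef.fromBlocks₂₂ _ K PosDef.one).mpr (by simpa using hN.posSemidef)
  exact (PosDef.fromBlocks₁₁ K 1 hMpd).mp hblock

end Matrix

namespace IsStarProjection

variable {Γ : Matrix m m 𝕜} (hΓ : IsStarProjection Γ)
include hΓ

theorem conjTranspose_matrix_mul (B : Matrix l m 𝕜) : (B * Γ)ᴴ = Γ * Bᴴ :=
  (conjTranspose_mul B Γ).trans (congrArg (· * Bᴴ) hΓ.isSelfAdjoint)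

variable [Fintype l] [DecidableEq l] (B : Matrix l m 𝕜) {N : Matrix l l 𝕜} (hN : 0 ≤ N)
include hN

theorem mul_conjTranspose_mul_inv_mul_mul_nonneg :
    0 ≤ Γ * Bᴴ * (B * Γ * Bᴴ + N)⁻¹ * B * Γ := by
  have hM : (B * Γ * Bᴴ + N).PosSemidef :=
    (hΓ.nonneg.posSemidef.mul_mul_conjTranspose_same B).add hN.posSemidef
  simpa only [hΓ.conjTranspose_matrix_mul, Matrix.mul_assoc] using
    (hM.inv.conjTranspose_mul_mul_same (B * Γ)).nonneg

theorem mul_conjTranspose_mul_inv_mul_mul_le [DecidableEq m] (hM : IsUnit (B * Γ * Bᴴ + N)) :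
    Γ * Bᴴ * (B * Γ * Bᴴ + N)⁻¹ * B * Γ ≤ Γ := by
  have hΓΓ : Γ * Γ = Γ := hΓ.isIdempotentElem.eq
  have hΓΓ' (X : Matrix m m 𝕜) : Γ * (Γ * X) = Γ * X := by rw [← Matrix.mul_assoc, hΓΓ]
  have hKK : B * Γ * (B * Γ)ᴴ = B * Γ * Bᴴ := by
    rw [hΓ.conjTranspose_matrix_mul, Matrix.mul_assoc B, ← Matrix.mul_assoc Γ, hΓΓ,
      Matrix.mul_assoc]
  have hle := conjTranspose_mul_inv_mul_le_one hN (hKK ▸ hM)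
  rw [hKK, hΓ.conjTranspose_matrix_mul] at hle
  calc Γ * Bᴴ * (B * Γ * Bᴴ + N)⁻¹ * B * Γ
      = star Γ * (Γ * Bᴴ * (B * Γ * Bᴴ + N)⁻¹ * (B * Γ)) * Γ := by
        simp only [hΓ.isSelfAdjoint.star_eq, Matrix.mul_assoc, hΓΓ, hΓΓ']
    _ ≤ star Γ * 1 * Γ := star_left_conjugate_le_conjugate hle Γ
    _ = Γ := by rw [hΓ.isSelfAdjoint.star_eq, Matrix.mul_one, hΓΓ]

end IsStarProjection

theorem partialP_mem_Icc {l m r : ℕ} {γ : Fin m → ℝ}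
    (hΓ : IsStarProjection (diagonal γ)) (B : Matrix (Fin l) (Fin m) ℝ)
    (Z : Matrix (Fin r) (Fin l) ℝ) {μ : ℝ} (hμ : 0 ≤ μ)
    (hinv : IsUnit (B * diagonal γ * Bᵀ + μ • (Zᵀ * Z))) :
    partialP γ B Z μ ∈ Set.Icc 0 (diagonal γ) := by
  have hN : 0 ≤ μ • (Zᴴ * Z) := ((posSemidef_conjTranspose_mul_self Z).smul hμ).nonneg
  simp only [partialP, ← conjTranspose_eq_transpose_of_trivial] at hinv ⊢
  exact ⟨sub_nonneg.mpr (hΓ.mul_conjTranspose_mul_inv_mul_mul_le B hN hinv),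
    sub_le_self _ (hΓ.mul_conjTranspose_mul_inv_mul_mul_nonneg B hN)⟩

/-- for each warp, `O ⪯ P ⪯ Γ ⪯ I`; consequently the sum of `n`
such matrices satisfies `O ⪯ ∑ Pᵢ ⪯ n I`. -/
theorem partialP_psd_bounds (n m : ℕ) (l r : Fin n → ℕ)
    (γ : Fin n → Fin m → ℝ) (hγ : ∀ i j, γ i j = 0 ∨ γ i j = 1)
    (B : ∀ i, Matrix (Fin (l i)) (Fin m) ℝ)
    (Z : ∀ i, Matrix (Fin (r i)) (Fin (l i)) ℝ)
    (μ : Fin n → ℝ) (hμ : ∀ i, 0 ≤ μ i)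
    (hinv : ∀ i, IsUnit (B i * Matrix.diagonal (γ i) * (B i)ᵀ + μ i • ((Z i)ᵀ * Z i))) :
    (∀ i, (partialP (γ i) (B i) (Z i) (μ i)).PosSemidef ∧
      (Matrix.diagonal (γ i) - partialP (γ i) (B i) (Z i) (μ i)).PosSemidef ∧
      ((1 : Matrix (Fin m) (Fin m) ℝ) - Matrix.diagonal (γ i)).PosSemidef) ∧
    (∑ i, partialP (γ i) (B i) (Z i) (μ i)).PosSemidef ∧
    ((n : ℝ) • (1 : Matrix (Fin m) (Fin m) ℝ) -
      ∑ i, partialP (γ i) (B i) (Z i) (μ i)).PosSemidef := by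
  have hΓ i : IsStarProjection (diagonal (γ i)) := isStarProjection_diagonal fun j =>
    ⟨IsIdempotentElem.iff_eq_zero_or_one.mpr (hγ i j), .all _⟩
  have hP i := partialP_mem_Icc (hΓ i) (B i) (Z i) (hμ i) (hinv i)
  refine ⟨fun i => ⟨(hP i).1.posSemidef, (hP i).2, (hΓ i).le_one⟩,
    (Finset.sum_nonneg fun i _ => (hP i).1).posSemidef, le_iff.mp ?_⟩
  calc ∑ i, partialP (γ i) (B i) (Z i) (μ i)
      ≤ ∑ _i : Fin n, 1 := Finset.sum_le_sum fun i _ => (hP i).2.trans (hΓ i).le_one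
    _ = (n : ℝ) • 1 := by
      rw [Finset.sum_const, Finset.card_univ, Fintype.card_fin, Nat.cast_smul_eq_nsmul]
end

section
/- For i = 1, …, n let D_i ∈ ℝ^{d×m} with homogeneous representations D̃_i = [D_i; 𝟏ᵀ] such that each D̃_i D̃_iᵀ is invertible, and let Q = ∑_{i=1}^{n} D̃_iᵀ (D̃_i D̃_iᵀ)⁻¹ D̃_i. If each datum shape is replaced by a rigidly transformed shape D_i' = R_i D_i + t_i 𝟏ᵀ, where R_i ∈ ℝ^{d×d} are rotation matrices (R_iᵀ R_i = I_d) and t_i ∈ ℝ^d, then with D̃_i' = [D_i'; 𝟏ᵀ] the matrix Q' = ∑_{i=1}^{n} D̃_i'ᵀ (D̃_i' D̃_i'ᵀ)⁻¹ D̃_i' is well defined (each D̃_i' D̃_i'ᵀ is invertible) and Q' = Q. -/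
/-!
In homogeneous coordinates the rigid motion `D ↦ R D + t 𝟏ᵀ` is left multiplication of `D̃` by
the block matrix `[[R, t], [0, 1]]`, which is invertible because `R` is. The matrix
`Bᵀ (B Bᵀ)⁻¹ B`, the orthogonal projection onto the row space of `B`, is unchanged when `B` is
replaced by `A B` with `A` invertible, since the factors `Aᵀ` and `A` cancel against
`(A B Bᵀ Aᵀ)⁻¹ = Aᵀ⁻¹ (B Bᵀ)⁻¹ A⁻¹`.
-/

open Matrix

/-- Homogeneous representation `D̃ = [D; 𝟏ᵀ]` of a shape `D ∈ ℝ^{d×m}`. -/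
def homog {d m : ℕ} (D : Matrix (Fin d) (Fin m) ℝ) :
    Matrix (Fin d ⊕ Fin 1) (Fin m) ℝ :=
  Matrix.fromRows D (Matrix.of fun _ _ => (1 : ℝ))

namespace Matrix

section RowSpaceProjection

variable {k m α : Type*} [Fintype k] [Fintype m] [CommRing α]

lemma mul_mul_transpose_mul (A : Matrix k k α) (B : Matrix k m α) :
    (A * B) * (A * B)ᵀ = A * (B * Bᵀ) * Aᵀ := by
  rw [transpose_mul, Matrix.mul_assoc, Matrix.mul_assoc, Matrix.mul_assoc]

lemma isUnit_mul_mul_transpose_mul [DecidableEq k] {A : Matrix k k α} (hA : IsUnit A)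
    {B : Matrix k m α} (hB : IsUnit (B * Bᵀ)) : IsUnit ((A * B) * (A * B)ᵀ) := by
  rw [mul_mul_transpose_mul]
  exact (hA.mul hB).mul ((isUnit_transpose A).mpr hA)

lemma transpose_mul_inv_mul_of_isUnit_left [DecidableEq k] {A : Matrix k k α} (hA : IsUnit A)
    (B : Matrix k m α) :
    (A * B)ᵀ * ((A * B) * (A * B)ᵀ)⁻¹ * (A * B) = Bᵀ * (B * Bᵀ)⁻¹ * B := by
  have hAdet : IsUnit A.det := (isUnit_iff_isUnit_det A).mp hA
  have hAtdet : IsUnit Aᵀ.det := by rwa [det_transpose]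
  calc (A * B)ᵀ * ((A * B) * (A * B)ᵀ)⁻¹ * (A * B)
      = Bᵀ * (Aᵀ * Aᵀ⁻¹) * (B * Bᵀ)⁻¹ * (A⁻¹ * A) * B := by
        rw [mul_mul_transpose_mul, Matrix.mul_inv_rev, Matrix.mul_inv_rev, transpose_mul]
        simp only [Matrix.mul_assoc]
    _ = Bᵀ * (B * Bᵀ)⁻¹ * B := by
        rw [mul_nonsing_inv _ hAtdet, nonsing_inv_mul _ hAdet, Matrix.mul_one, Matrix.mul_one]

end RowSpaceProjection

end Matrix

def affineHomog {d : ℕ} {α : Type*} [Zero α] [One α] (R : Matrix (Fin d) (Fin d) α)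
    (t : Fin d → α) : Matrix (Fin d ⊕ Fin 1) (Fin d ⊕ Fin 1) α :=
  fromBlocks R (replicateCol (Fin 1) t) 0 1

lemma isUnit_affineHomog {d : ℕ} {α : Type*} [CommRing α] {R : Matrix (Fin d) (Fin d) α}
    (hR : IsUnit R) (t : Fin d → α) : IsUnit (affineHomog R t) :=
  isUnit_fromBlocks_zero₂₁.mpr ⟨hR, isUnit_one⟩

lemma homog_mul_add_vecMulVec {d m : ℕ} (R : Matrix (Fin d) (Fin d) ℝ)
    (D : Matrix (Fin d) (Fin m) ℝ) (t : Fin d → ℝ) :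
    homog (R * D + vecMulVec t (fun _ => 1)) = affineHomog R t * homog D := by
  rw [homog, homog, affineHomog, fromBlocks_mul_fromRows]
  ext (r | r) c <;> simp [mul_apply, vecMulVec]

/-- replacing each datum shape by a rigidly transformed shape
`Dᵢ' = Rᵢ Dᵢ + tᵢ 𝟏ᵀ` keeps each `D̃ᵢ' D̃ᵢ'ᵀ` invertible and leaves the matrix
`Q = ∑ᵢ D̃ᵢᵀ (D̃ᵢ D̃ᵢᵀ)⁻¹ D̃ᵢ` unchanged. -/
theorem sum_homog_projection_rigid_invariant (n d m : ℕ)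
    (D : Fin n → Matrix (Fin d) (Fin m) ℝ)
    (hinv : ∀ i, IsUnit (homog (D i) * (homog (D i))ᵀ))
    (R : Fin n → Matrix (Fin d) (Fin d) ℝ) (hR : ∀ i, (R i)ᵀ * R i = 1)
    (t : Fin n → Fin d → ℝ)
    (D' : Fin n → Matrix (Fin d) (Fin m) ℝ)
    (hD' : ∀ i, D' i = R i * D i + vecMulVec (t i) (fun _ => 1)) :
    (∀ i, IsUnit (homog (D' i) * (homog (D' i))ᵀ)) ∧
    (∑ i, (homog (D' i))ᵀ * (homog (D' i) * (homog (D' i))ᵀ)⁻¹ * homog (D' i)) =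
      (∑ i, (homog (D i))ᵀ * (homog (D i) * (homog (D i))ᵀ)⁻¹ * homog (D i)) := by
  have hA : ∀ i, IsUnit (affineHomog (R i) (t i)) := fun i =>
    isUnit_affineHomog ((isUnit_iff_isUnit_det _).mpr (isUnit_det_of_left_inverse (hR i))) _
  have hhomog : ∀ i, homog (D' i) = affineHomog (R i) (t i) * homog (D i) := fun i => by
    rw [hD' i, homog_mul_add_vecMulVec]
  refine ⟨fun i => ?_, Finset.sum_congr rfl fun i _ => ?_⟩
  · rw [hhomog i]
    exact isUnit_mul_mul_transpose_mul (hA i) (hinv i)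
  · rw [hhomog i]
    exact transpose_mul_inv_mul_of_isUnit_left (hA i) _
end

section
/- For i = 1, …, n let D_i ∈ ℝ^{d×m}, let D̄_i = D_i − (1/m) D_i 𝟏 𝟏ᵀ be the zero-centered shapes, and let D̃_i = [D_i; 𝟏ᵀ] be the homogeneous representations. Assume each D̄_i D̄_iᵀ and each D̃_i D̃_iᵀ is invertible. Define Q = ∑_{i=1}^{n} D̃_iᵀ (D̃_i D̃_iᵀ)⁻¹ D̃_i and Q∘ = ∑_{i=1}^{n} D̄_iᵀ (D̄_i D̄_iᵀ)⁻¹ D̄_i. Then Q = (n/m) 𝟏 𝟏ᵀ + Q∘, and moreover Q∘ 𝟏 = 0 and Q 𝟏 = n 𝟏. -/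
open Matrix

/-!
Each summand `Aᵀ (A Aᵀ)⁻¹ A` is the orthogonal projection onto the row space of `A`, which is
unchanged by row operations `A ↦ G A`. Subtracting from each of the first `d` rows of `D̃` its mean
times the last row `𝟏ᵀ` turns `D̃` into `[D̄; 𝟏ᵀ]`. As `D̄ 𝟏 = 0`, the Gram matrix of `[D̄; 𝟏ᵀ]` is
block diagonal, so its projection splits as the projection for `D̄` plus `(1/m) 𝟏 𝟏ᵀ`, the
projection onto `𝟏`.
-/

namespace Matrix

section CommRing

variable {R : Type*} [CommRing R] {ι κ n : Type*} [Fintype ι] [DecidableEq ι]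
  [Fintype κ] [DecidableEq κ] [Fintype n]

noncomputable def rowProj (A : Matrix ι n R) : Matrix n n R := Aᵀ * (A * Aᵀ)⁻¹ * A

theorem rowProj_mul_left {G : Matrix ι ι R} (hG : IsUnit G) (A : Matrix ι n R) :
    rowProj (G * A) = rowProj A := by
  have hG' : IsUnit G.det := (isUnit_iff_isUnit_det G).mp hG
  have hGt : IsUnit Gᵀ.det := by rwa [det_transpose]
  have hinv : (G * A * (G * A)ᵀ)⁻¹ = Gᵀ⁻¹ * (A * Aᵀ)⁻¹ * G⁻¹ := by
    rw [transpose_mul, show G * A * (Aᵀ * Gᵀ) = G * (A * Aᵀ) * Gᵀ by simp only [Matrix.mul_assoc],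
      mul_inv_rev, mul_inv_rev, Matrix.mul_assoc]
  rw [rowProj, hinv, transpose_mul]
  simp only [Matrix.mul_assoc, mul_nonsing_inv_cancel_left (A := Gᵀ) _ hGt,
    nonsing_inv_mul_cancel_left (A := G) _ hG', rowProj]

theorem rowProj_fromRows {B : Matrix ι n R} {C : Matrix κ n R} (hBC : B * Cᵀ = 0)
    (hB : IsUnit (B * Bᵀ)) (hC : IsUnit (C * Cᵀ)) :
    rowProj (fromRows B C) = rowProj B + rowProj C := by
  have hCB : C * Bᵀ = 0 := by simpa using congrArg transpose hBC
  simp only [rowProj, transpose_fromRows, fromRows_mul_fromCols, hBC, hCB,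
    inv_fromBlocks_zero₁₂_of_isUnit_iff _ _ _ (iff_of_true hB hC), fromCols_mul_fromBlocks,
    fromCols_mul_fromRows]
  simp

theorem rowProj_fromRows_add_mul (B : Matrix ι n R) (C : Matrix κ n R) (X : Matrix ι κ R) :
    rowProj (fromRows (B + X * C) C) = rowProj (fromRows B C) := by
  have hG : IsUnit (fromBlocks 1 X 0 1 : Matrix (ι ⊕ κ) (ι ⊕ κ) R) := by
    simp [isUnit_iff_isUnit_det]
  rw [← rowProj_mul_left hG (fromRows B C), fromBlocks_mul_fromRows]
  simp

theorem rowProj_mulVec_eq_zero {A : Matrix ι n R} {v : n → R} (hv : A *ᵥ v = 0) :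
    rowProj A *ᵥ v = 0 := by
  rw [rowProj, ← mulVec_mulVec, hv, mulVec_zero]

end CommRing

section Field

variable {K : Type*} [Field K] {ι n : Type*} [Fintype n]

def centered (D : Matrix ι n K) : Matrix ι n K :=
  D - (1 / (Fintype.card n : K)) • (D * vecMulVec (1 : n → K) 1)

theorem rowProj_replicateRow {v : n → K} (hv : v ⬝ᵥ v ≠ 0) :
    rowProj (replicateRow (Fin 1) v) = (v ⬝ᵥ v)⁻¹ • vecMulVec v v := by
  have hinv : (of fun _ _ => v ⬝ᵥ v : Matrix (Fin 1) (Fin 1) K)⁻¹ = of fun _ _ => (v ⬝ᵥ v)⁻¹ :=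
    inv_eq_left_inv (by ext i j; fin_cases i; fin_cases j; simp [mul_apply, hv])
  rw [rowProj, transpose_replicateRow, replicateRow_mul_replicateCol, hinv]
  ext i j
  simp [mul_apply, vecMulVec_apply]
  ring

theorem centered_mulVec_one (hn : (Fintype.card n : K) ≠ 0) (D : Matrix ι n K) :
    centered D *ᵥ 1 = 0 := by
  rw [centered, sub_mulVec, smul_mulVec, ← mulVec_mulVec, vecMulVec_mulVec, one_dotProduct_one,
    op_smul_eq_smul, mulVec_smul, smul_smul, one_div, inv_mul_cancel₀ hn, one_smul, sub_self]

theorem centered_mul_replicateCol_one (hn : (Fintype.card n : K) ≠ 0) (D : Matrix ι n K) :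
    centered D * replicateCol (Fin 1) (1 : n → K) = 0 := by
  ext i j
  simpa [mul_apply, mulVec, dotProduct] using congrFun (centered_mulVec_one hn D) i

end Field

end Matrix

theorem rowProj_homog {d m : ℕ} (hm : m ≠ 0) (D : Matrix (Fin d) (Fin m) ℝ)
    (hD : IsUnit (centered D * (centered D)ᵀ)) :
    rowProj (homog D) = (1 / (m : ℝ)) • vecMulVec 1 1 + rowProj (centered D) := by
  have hm' : (Fintype.card (Fin m) : ℝ) ≠ 0 := by simpa using hm
  have hD_eq : centered D + vecMulVec ((1 / (Fintype.card (Fin m) : ℝ)) • D *ᵥ 1) 1 = D := by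
    rw [smul_vecMulVec, ← mul_vecMulVec, centered, sub_add_cancel]
  rw [vecMulVec_eq (Fin 1)] at hD_eq
  have hones : (1 : Fin m → ℝ) ⬝ᵥ 1 ≠ 0 := by simpa using hm
  calc rowProj (homog D) = rowProj (fromRows (centered D) (replicateRow (Fin 1) 1)) := by
        conv_lhs => rw [homog, ← hD_eq]
        exact rowProj_fromRows_add_mul _ _ _
    _ = _ := by
        rw [rowProj_fromRows (C := replicateRow (Fin 1) 1)
            (centered_mul_replicateCol_one hm' D) hD
            (by simpa [replicateRow_mul_replicateCol, isUnit_iff_isUnit_det] using hones),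
          rowProj_replicateRow hones, add_comm, one_dotProduct_one, Fintype.card_fin, one_div]

theorem homog_projection_eq_centered_general (n d m : ℕ)
    (D : Fin n → Matrix (Fin d) (Fin m) ℝ)
    (Dbar : Fin n → Matrix (Fin d) (Fin m) ℝ)
    (hDbar : ∀ i, Dbar i = D i -
      (1 / (m : ℝ)) • (D i * vecMulVec (fun _ => (1 : ℝ)) (fun _ => (1 : ℝ))))
    (hbar_inv : ∀ i, IsUnit (Dbar i * (Dbar i)ᵀ)) :
    (∑ i, (homog (D i))ᵀ * (homog (D i) * (homog (D i))ᵀ)⁻¹ * homog (D i)) =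
      ((n : ℝ) / (m : ℝ)) • vecMulVec (fun _ => (1 : ℝ)) (fun _ => (1 : ℝ)) +
        (∑ i, (Dbar i)ᵀ * (Dbar i * (Dbar i)ᵀ)⁻¹ * Dbar i) ∧
    (∑ i, (Dbar i)ᵀ * (Dbar i * (Dbar i)ᵀ)⁻¹ * Dbar i) *ᵥ (fun _ => (1 : ℝ)) = 0 ∧
    (∑ i, (homog (D i))ᵀ * (homog (D i) * (homog (D i))ᵀ)⁻¹ * homog (D i)) *ᵥ
        (fun _ => (1 : ℝ)) = (n : ℝ) • (fun _ => (1 : ℝ)) := by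
  rcases eq_or_ne m 0 with rfl | hm
  · exact ⟨Subsingleton.elim _ _, Subsingleton.elim _ _, Subsingleton.elim _ _⟩
  have hm' : (Fintype.card (Fin m) : ℝ) ≠ 0 := by simpa using hm
  have hcentered : ∀ i, Dbar i = centered (D i) := by
    intro i
    rw [hDbar i, centered, Fintype.card_fin]
    rfl
  simp only [← rowProj.eq_def, hcentered, ← Pi.one_def] at hbar_inv ⊢
  have hQ : ∑ i, rowProj (homog (D i)) =
      ((n : ℝ) / m) • vecMulVec 1 1 + ∑ i, rowProj (centered (D i)) := by
    rw [Finset.sum_congr rfl fun i _ => rowProj_homog hm (D i) (hbar_inv i),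
      Finset.sum_add_distrib, Finset.sum_const, Finset.card_univ, Fintype.card_fin,
      ← Nat.cast_smul_eq_nsmul ℝ, smul_smul, mul_one_div]
  have hQ₀ : (∑ i, rowProj (centered (D i))) *ᵥ 1 = 0 := by
    rw [sum_mulVec]
    exact Finset.sum_eq_zero fun i _ => rowProj_mulVec_eq_zero (centered_mulVec_one hm' (D i))
  refine ⟨hQ, hQ₀, ?_⟩
  rw [hQ, add_mulVec, hQ₀, add_zero, smul_mulVec, vecMulVec_mulVec, one_dotProduct_one,
    op_smul_eq_smul, smul_smul, Fintype.card_fin, div_mul_cancel₀ _ (Nat.cast_ne_zero.mpr hm)]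

/-- with `Q = ∑ᵢ D̃ᵢᵀ (D̃ᵢ D̃ᵢᵀ)⁻¹ D̃ᵢ` and
`Q∘ = ∑ᵢ D̄ᵢᵀ (D̄ᵢ D̄ᵢᵀ)⁻¹ D̄ᵢ` for the zero-centered shapes
`D̄ᵢ = Dᵢ − (1/m) Dᵢ 𝟏 𝟏ᵀ`, we have `Q = (n/m) 𝟏 𝟏ᵀ + Q∘`, `Q∘ 𝟏 = 0` and
`Q 𝟏 = n 𝟏`. -/
theorem homog_projection_eq_centered (n d m : ℕ)
    (D : Fin n → Matrix (Fin d) (Fin m) ℝ)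
    (Dbar : Fin n → Matrix (Fin d) (Fin m) ℝ)
    (hDbar : ∀ i, Dbar i = D i -
      (1 / (m : ℝ)) • (D i * vecMulVec (fun _ => (1 : ℝ)) (fun _ => (1 : ℝ))))
    (hbar_inv : ∀ i, IsUnit (Dbar i * (Dbar i)ᵀ))
    (htil_inv : ∀ i, IsUnit (homog (D i) * (homog (D i))ᵀ)) :
    (∑ i, (homog (D i))ᵀ * (homog (D i) * (homog (D i))ᵀ)⁻¹ * homog (D i)) =
      ((n : ℝ) / (m : ℝ)) • vecMulVec (fun _ => (1 : ℝ)) (fun _ => (1 : ℝ)) +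
        (∑ i, (Dbar i)ᵀ * (Dbar i * (Dbar i)ᵀ)⁻¹ * Dbar i) ∧
    (∑ i, (Dbar i)ᵀ * (Dbar i * (Dbar i)ᵀ)⁻¹ * Dbar i) *ᵥ (fun _ => (1 : ℝ)) = 0 ∧
    (∑ i, (homog (D i))ᵀ * (homog (D i) * (homog (D i))ᵀ)⁻¹ * homog (D i)) *ᵥ
        (fun _ => (1 : ℝ)) = (n : ℝ) • (fun _ => (1 : ℝ)) :=
  homog_projection_eq_centered_general n d m D Dbar hDbar hbar_inv
end

section
/- Let Q be an m×m real symmetric positive semidefinite matrix with Q 𝟏 = n 𝟏 for some n > 0, let d ≤ m − 1, let Λ = diag(λ₁, …, λ_d) with λ₁ ≥ λ₂ ≥ … ≥ λ_d ≥ 0, and let ν ≥ n/m. Then the hard-constrained and soft-constrained problems have the same optimal value: sup { tr(S (Q − ν 𝟏 𝟏ᵀ) Sᵀ) : S ∈ ℝ^{d×m}, S Sᵀ = Λ } = sup { tr(S Q Sᵀ) : S ∈ ℝ^{d×m}, S Sᵀ = Λ, S 𝟏 = 0 }. -/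
/-!
Let `P` be the orthogonal projection onto `𝟏⊥` and `x = S 𝟏`. As `Q` is symmetric with
`Q 𝟏 = n 𝟏`, splitting `S = S P + x 𝟏ᵀ / m` gives `S Sᵀ = B Bᵀ + x xᵀ / m` and
`tr(S Q Sᵀ) = tr(B Q Bᵀ) + (n / m) ‖x‖²` for `B = S P`, so when `ν ≥ n / m` the soft objective at
`S` is at most `tr(B Q Bᵀ)`, where `B 𝟏 = 0` and `Λ - B Bᵀ = x xᵀ / m` has rank at most one.
It remains to enlarge `B` to a hard-feasible `S'` without decreasing the objective. If `ker B`
contains a nonzero `w ⊥ 𝟏`, scaled to `‖w‖² = 1 / m`, take `S' = B ± x wᵀ`, the sign chosen so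
that the cross term is nonnegative. Otherwise `d + 1 ≤ m` forces `G = B Bᵀ` to be invertible, and
`S' = Λ^{1/2} G^{-1/2} B` works, because `tr(S' Q S'ᵀ) - tr(B Q Bᵀ) = tr(R (Λ - G)) ≥ 0` for
`R = G^{-1/2} B Q Bᵀ G^{-1/2}`. Conversely every hard value is a soft value.
-/

open Matrix

namespace Matrix

variable {ι κ : Type*} [Fintype κ]

theorem PosSemidef.trace_mul_nonneg [Fintype ι] {A B : Matrix ι ι ℝ} (hA : A.PosSemidef)
    (hB : B.PosSemidef) : 0 ≤ (A * B).trace := by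
  classical
  open scoped MatrixOrder in
  obtain ⟨E, rfl⟩ := CStarAlgebra.nonneg_iff_eq_star_mul_self.mp hB.nonneg
  rw [← Matrix.mul_assoc, trace_mul_comm, ← Matrix.mul_assoc, star_eq_conjTranspose]
  exact (hA.mul_mul_conjTranspose_same E).trace_nonneg

theorem PosSemidef.trace_mul_mul_transpose_nonneg [Fintype ι] {Q : Matrix κ κ ℝ}
    (hQ : Q.PosSemidef) (B : Matrix ι κ ℝ) : 0 ≤ (B * Q * Bᵀ).trace := by
  simpa [conjTranspose_eq_transpose_of_trivial] using
    (hQ.mul_mul_conjTranspose_same B).trace_nonneg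

theorem posSemidef_self_mul_transpose [Fintype ι] (B : Matrix ι κ ℝ) : (B * Bᵀ).PosSemidef := by
  simpa [conjTranspose_eq_transpose_of_trivial] using posSemidef_self_mul_conjTranspose B

theorem trace_mul_sub_smul_vecMulVec_mul_transpose [Fintype ι] (S : Matrix ι κ ℝ)
    (Q : Matrix κ κ ℝ) (ν : ℝ) (u : κ → ℝ) :
    (S * (Q - ν • vecMulVec u u) * Sᵀ).trace =
      (S * Q * Sᵀ).trace - ν * ((S *ᵥ u) ⬝ᵥ (S *ᵥ u)) := by
  rw [Matrix.mul_sub, Matrix.sub_mul, trace_sub, Matrix.mul_smul, Matrix.smul_mul, trace_smul,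
    mul_vecMulVec, vecMulVec_mul, vecMul_transpose, trace_vecMulVec, smul_eq_mul]

noncomputable def mulProjOrth (S : Matrix ι κ ℝ) (u : κ → ℝ) : Matrix ι κ ℝ :=
  S - (u ⬝ᵥ u)⁻¹ • vecMulVec (S *ᵥ u) u

theorem mulProjOrth_mulVec_self (S : Matrix ι κ ℝ) (u : κ → ℝ) : mulProjOrth S u *ᵥ u = 0 := by
  rcases eq_or_ne u 0 with rfl | hu
  · exact mulVec_zero _
  · have huu : u ⬝ᵥ u ≠ 0 := fun h => hu (dotProduct_self_eq_zero.mp h)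
    simp only [mulProjOrth, sub_mulVec, smul_mulVec, vecMulVec_mulVec, op_smul_eq_smul, smul_smul,
      inv_mul_cancel₀ huu, one_smul, sub_self]

theorem mul_mul_transpose_eq_mulProjOrth_add {Q : Matrix κ κ ℝ} (hQ : Qᵀ = Q) {u : κ → ℝ}
    {μ : ℝ} (hQu : Q *ᵥ u = μ • u) (S : Matrix ι κ ℝ) :
    S * Q * Sᵀ = mulProjOrth S u * Q * (mulProjOrth S u)ᵀ +
      (μ * (u ⬝ᵥ u)⁻¹) • vecMulVec (S *ᵥ u) (S *ᵥ u) := by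
  set B := mulProjOrth S u
  set x := S *ᵥ u
  set V := vecMulVec x u
  have hS : S = B + (u ⬝ᵥ u)⁻¹ • V := (sub_add_cancel _ _).symm
  have hBQV : B * Q * Vᵀ = 0 := by
    rw [transpose_vecMulVec, mul_vecMulVec, ← mulVec_mulVec, hQu, mulVec_smul,
      mulProjOrth_mulVec_self, smul_zero, zero_vecMulVec]
  have hVQB : V * Q * Bᵀ = 0 := by
    rw [← transpose_eq_zero, transpose_mul, transpose_mul, hQ, transpose_transpose,
      ← Matrix.mul_assoc, hBQV]
  have hVQV : V * Q * Vᵀ = (μ * (u ⬝ᵥ u)) • vecMulVec x x := by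
    rw [transpose_vecMulVec, Matrix.mul_assoc, mul_vecMulVec, hQu, vecMulVec_mul_vecMulVec,
      dotProduct_smul, smul_eq_mul, vecMulVec_smul]
  conv_lhs => rw [hS]
  simp only [transpose_add, transpose_smul, Matrix.add_mul, Matrix.mul_add, Matrix.smul_mul,
    Matrix.mul_smul, hBQV, hVQB, hVQV, smul_zero, add_zero, zero_add, smul_smul]
  congr 2
  rcases eq_or_ne (u ⬝ᵥ u) 0 with h | h
  · simp [h]
  · field_simp

section Exchange

variable [Fintype ι] {Q : Matrix κ κ ℝ}

theorem trace_le_or_trace_le_sub (hQ : Q.PosSemidef) (B V : Matrix ι κ ℝ) :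
    (B * Q * Bᵀ).trace ≤ ((B + V) * Q * (B + V)ᵀ).trace ∨
      (B * Q * Bᵀ).trace ≤ ((B - V) * Q * (B - V)ᵀ).trace := by
  have hsum : ((B + V) * Q * (B + V)ᵀ).trace + ((B - V) * Q * (B - V)ᵀ).trace
      = 2 * ((B * Q * Bᵀ).trace + (V * Q * Vᵀ).trace) := by
    simp only [transpose_add, transpose_sub, Matrix.add_mul, Matrix.mul_add, Matrix.sub_mul,
      Matrix.mul_sub, trace_add, trace_sub]
    ring
  have := hQ.trace_mul_mul_transpose_nonneg V
  by_contra! h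
  linarith [h.1, h.2]

theorem exists_mul_transpose_eq_add_vecMulVec_of_mulVec_eq_zero (hQ : Q.PosSemidef)
    (B : Matrix ι κ ℝ) {u w : κ → ℝ} (hBw : B *ᵥ w = 0) (huw : u ⬝ᵥ w = 0) (y : ι → ℝ) :
    ∃ S : Matrix ι κ ℝ, S * Sᵀ = B * Bᵀ + (w ⬝ᵥ w) • vecMulVec y y ∧ S *ᵥ u = B *ᵥ u ∧
      (B * Q * Bᵀ).trace ≤ (S * Q * Sᵀ).trace := by
  set V := vecMulVec y w
  have hBV : B * Vᵀ = 0 := by rw [transpose_vecMulVec, mul_vecMulVec, hBw, zero_vecMulVec]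
  have hVB : V * Bᵀ = 0 := by rw [← transpose_transpose V, ← transpose_mul, hBV, transpose_zero]
  have hVV : V * Vᵀ = (w ⬝ᵥ w) • vecMulVec y y := by
    rw [transpose_vecMulVec, vecMulVec_mul_vecMulVec, vecMulVec_smul]
  have hVu : V *ᵥ u = 0 := by
    rw [vecMulVec_mulVec, dotProduct_comm, huw]; simp
  rcases trace_le_or_trace_le_sub hQ B V with h | h
  · refine ⟨B + V, ?_, by rw [add_mulVec, hVu, add_zero], h⟩
    simp only [transpose_add, Matrix.add_mul, Matrix.mul_add, hBV, hVB, hVV, add_zero, zero_add]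
  · refine ⟨B - V, ?_, by rw [sub_mulVec, hVu, sub_zero], h⟩
    simp only [transpose_sub, Matrix.sub_mul, Matrix.mul_sub, hBV, hVB, hVV, sub_zero]
    abel

open scoped MatrixOrder in
theorem transpose_cfcSqrt [DecidableEq ι] (A : Matrix ι ι ℝ) : (CFC.sqrt A)ᵀ = CFC.sqrt A := by
  simpa [conjTranspose_eq_transpose_of_trivial] using (CFC.sqrt_nonneg A).posSemidef.1.eq

open scoped MatrixOrder in
theorem exists_mul_mul_transpose_eq_of_isUnit [DecidableEq ι] (hQ : Q.PosSemidef)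
    {B : Matrix ι κ ℝ} (hB : IsUnit (B * Bᵀ)) {Λ : Matrix ι ι ℝ}
    (hΛ : (Λ - B * Bᵀ).PosSemidef) :
    ∃ T : Matrix ι ι ℝ, T * B * (T * B)ᵀ = Λ ∧
      (B * Q * Bᵀ).trace ≤ (T * B * Q * (T * B)ᵀ).trace := by
  set G := B * Bᵀ
  have hG : G.PosSemidef := posSemidef_self_mul_transpose B
  have hΛ' : Λ.PosSemidef := by simpa using hG.add hΛ
  set E := CFC.sqrt G
  set D := CFC.sqrt Λ
  have hEE : E * E = G := CFC.sqrt_mul_sqrt_self G hG.nonneg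
  have hDD : D * D = Λ := CFC.sqrt_mul_sqrt_self Λ hΛ'.nonneg
  have hEt : Eᵀ = E := transpose_cfcSqrt G
  have hDt : Dᵀ = D := transpose_cfcSqrt Λ
  have hEdet : IsUnit E.det := by
    rw [← isUnit_iff_isUnit_det]
    exact isUnit_of_mul_isUnit_left (hEE ▸ hB)
  set N := E⁻¹
  have hNE : N * E = 1 := nonsing_inv_mul E hEdet
  have hEN : E * N = 1 := mul_nonsing_inv E hEdet
  have hNt : Nᵀ = N := by rw [transpose_nonsing_inv, hEt]
  set R := N * (B * Q * Bᵀ) * N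
  have hR : R.PosSemidef := by
    simpa [conjTranspose_eq_transpose_of_trivial, hNt] using
      (hQ.mul_mul_conjTranspose_same B).mul_mul_conjTranspose_same N
  refine ⟨D * N, ?_, ?_⟩
  · calc D * N * B * (D * N * B)ᵀ = D * N * G * N * D := by
          simp only [transpose_mul, hNt, hDt, G, Matrix.mul_assoc]
      _ = D * (N * E) * (E * N) * D := by rw [← hEE]; simp only [Matrix.mul_assoc]
      _ = Λ := by rw [hNE, hEN, Matrix.mul_one, Matrix.mul_one, hDD]
  · have hold : (B * Q * Bᵀ).trace = (R * G).trace := by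
      have : B * Q * Bᵀ = E * R * E := by
        simp only [R, ← Matrix.mul_assoc, hEN, Matrix.one_mul]
        rw [Matrix.mul_assoc _ N E, hNE, Matrix.mul_one]
      rw [this, trace_mul_comm, ← Matrix.mul_assoc, hEE, trace_mul_comm]
    have hnew : (D * N * B * Q * (D * N * B)ᵀ).trace = (R * Λ).trace := by
      have : D * N * B * Q * (D * N * B)ᵀ = D * R * D := by
        simp only [R, transpose_mul, hNt, hDt, Matrix.mul_assoc]
      rw [this, trace_mul_comm, ← Matrix.mul_assoc, hDD, trace_mul_comm]
    have := hR.trace_mul_nonneg hΛ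
    rw [Matrix.mul_sub, trace_sub] at this
    linarith

theorem exists_ne_zero_mulVec_eq_zero_of_not_isUnit [DecidableEq ι]
    (hcard : Fintype.card ι < Fintype.card κ) {B : Matrix ι κ ℝ} (hB : ¬IsUnit (B * Bᵀ))
    (u : κ → ℝ) : ∃ w ≠ 0, B *ᵥ w = 0 ∧ u ⬝ᵥ w = 0 := by
  obtain ⟨z, hz, hBBz⟩ : ∃ z ≠ 0, (B * Bᵀ) *ᵥ z = 0 := by
    rwa [exists_mulVec_eq_zero_iff, ← isUnit_iff_ne_zero.not_left, ← isUnit_iff_isUnit_det]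
  have hzB : z ᵥ* B = 0 := by
    rw [← dotProduct_self_eq_zero, ← dotProduct_mulVec, ← mulVec_transpose, mulVec_mulVec,
      hBBz, dotProduct_zero]
  by_contra! hker
  let L : (κ → ℝ) →ₗ[ℝ] (ι → ℝ) × ℝ := B.mulVecLin.prod (dotProductBilin ℝ ℝ u)
  have hL : Function.Injective L := by
    rw [← LinearMap.ker_eq_bot, LinearMap.ker_eq_bot']
    intro w hw
    by_contra hw0
    exact hker w hw0 (congrArg Prod.fst hw) (congrArg Prod.snd hw)
  have hrank : Module.finrank ℝ (κ → ℝ) = Module.finrank ℝ ((ι → ℝ) × ℝ) := by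
    have := LinearMap.finrank_le_finrank_of_injective hL
    simp only [Module.finrank_fintype_fun_eq_card, Module.finrank_prod,
      Module.finrank_self] at this ⊢
    omega
  -- `L` is onto, so `z ∈ range B`; together with `z ⊥ range B` this forces `z = 0`
  obtain ⟨v, hv⟩ := (LinearMap.injective_iff_surjective_of_finrank_eq_finrank hrank).mp hL (z, 0)
  have hBv : B *ᵥ v = z := congrArg Prod.fst hv
  apply hz
  rw [← dotProduct_self_eq_zero]
  nth_rw 2 [← hBv]
  rw [dotProduct_mulVec, hzB, zero_dotProduct]

theorem exists_mul_transpose_eq_add_smul_vecMulVec [DecidableEq ι]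
    (hcard : Fintype.card ι < Fintype.card κ) (hQ : Q.PosSemidef) {B : Matrix ι κ ℝ}
    {u : κ → ℝ} (hBu : B *ᵥ u = 0) (y : ι → ℝ) {c : ℝ} (hc : 0 ≤ c) :
    ∃ S : Matrix ι κ ℝ, S * Sᵀ = B * Bᵀ + c • vecMulVec y y ∧ S *ᵥ u = 0 ∧
      (B * Q * Bᵀ).trace ≤ (S * Q * Sᵀ).trace := by
  by_cases hB : IsUnit (B * Bᵀ)
  · have hgap : (B * Bᵀ + c • vecMulVec y y - B * Bᵀ).PosSemidef := by
      simpa using (posSemidef_vecMulVec_self_star y).smul hc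
    obtain ⟨T, hT, htr⟩ := exists_mul_mul_transpose_eq_of_isUnit hQ hB hgap
    exact ⟨T * B, hT, by rw [← mulVec_mulVec, hBu, mulVec_zero], htr⟩
  · obtain ⟨w, hw, hBw, huw⟩ := exists_ne_zero_mulVec_eq_zero_of_not_isUnit hcard hB u
    have hww : 0 < w ⬝ᵥ w :=
      lt_of_le_of_ne (by simpa using dotProduct_star_self_nonneg w)
        (Ne.symm (mt dotProduct_self_eq_zero.mp hw))
    set a := √(c / (w ⬝ᵥ w))
    have haw : (a • w) ⬝ᵥ (a • w) = c := by
      rw [smul_dotProduct, dotProduct_smul, smul_eq_mul, smul_eq_mul, ← mul_assoc,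
        Real.mul_self_sqrt (div_nonneg hc hww.le), div_mul_cancel₀ _ hww.ne']
    obtain ⟨S, hS, hSu, htr⟩ := exists_mul_transpose_eq_add_vecMulVec_of_mulVec_eq_zero hQ B
      (w := a • w) (by rw [mulVec_smul, hBw, smul_zero]) (by rw [dotProduct_smul, huw, smul_zero]) y
    exact ⟨S, haw ▸ hS, hSu.trans hBu, htr⟩

end Exchange

end Matrix

theorem soft_eq_hard_optimal_value_general (m d : ℕ) (hd : d + 1 ≤ m)
    (Q : Matrix (Fin m) (Fin m) ℝ) (hQ : Q.PosSemidef)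
    (n : ℝ)
    (hQ1 : Q *ᵥ (fun _ => (1 : ℝ)) = n • (fun _ => (1 : ℝ)))
    (lam : Fin d → ℝ)
    (ν : ℝ) (hν : n / (m : ℝ) ≤ ν) :
    sSup {c : ℝ | ∃ S : Matrix (Fin d) (Fin m) ℝ,
        S * Sᵀ = Matrix.diagonal lam ∧
        c = (S * (Q - ν • vecMulVec (fun _ => (1 : ℝ)) (fun _ => (1 : ℝ))) * Sᵀ).trace} =
      sSup {c : ℝ | ∃ S : Matrix (Fin d) (Fin m) ℝ,
        S * Sᵀ = Matrix.diagonal lam ∧ S *ᵥ (fun _ => (1 : ℝ)) = 0 ∧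
        c = (S * Q * Sᵀ).trace} := by
  set u : Fin m → ℝ := fun _ => 1
  have huu : u ⬝ᵥ u = m := by simp [u, dotProduct]
  have hcard : Fintype.card (Fin d) < Fintype.card (Fin m) := by simpa using hd
  have hQt : Qᵀ = Q := by simpa [conjTranspose_eq_transpose_of_trivial] using hQ.1.eq
  -- no boundedness needed: if one set is unbounded so is the other, and both `sSup`s are `0`
  apply csSup_eq_csSup_of_forall_exists_le
  · rintro _ ⟨S, hSS, rfl⟩
    have hgram := mul_mul_transpose_eq_mulProjOrth_add transpose_one (u := u) (μ := 1) (by simp) S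
    have hobj := mul_mul_transpose_eq_mulProjOrth_add hQt hQ1 S
    simp only [Matrix.mul_one, one_mul] at hgram
    obtain ⟨S', hS', hS'u, htr⟩ := exists_mul_transpose_eq_add_smul_vecMulVec hcard hQ
      (mulProjOrth_mulVec_self S u) (S *ᵥ u) (c := (u ⬝ᵥ u)⁻¹) (by rw [huu]; positivity)
    refine ⟨_, ⟨S', by rw [hS', ← hgram, hSS], hS'u, rfl⟩, ?_⟩
    rw [trace_mul_sub_smul_vecMulVec_mul_transpose, hobj, trace_add, trace_smul, trace_vecMulVec,
      huu, smul_eq_mul, ← div_eq_mul_inv]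
    have hx : 0 ≤ (S *ᵥ u) ⬝ᵥ (S *ᵥ u) := by simpa using dotProduct_star_self_nonneg (S *ᵥ u)
    nlinarith [mul_nonneg (sub_nonneg.mpr hν) hx]
  · rintro _ ⟨S, hSS, hSu, rfl⟩
    refine ⟨_, ⟨S, hSS, rfl⟩, ?_⟩
    rw [trace_mul_sub_smul_vecMulVec_mul_transpose, hSu, zero_dotProduct, mul_zero, sub_zero]

/-- for a symmetric positive semidefinite `Q` with `Q 𝟏 = n 𝟏`
(`n > 0`), `d ≤ m − 1`, `Λ = diag(λ)` with `λ` nonincreasing and nonnegative, and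
`ν ≥ n/m`, the soft-constrained problem (penalty `−ν ‖S 𝟏‖²`) and the
hard-constrained problem (`S 𝟏 = 0`) have the same optimal value. -/
theorem soft_eq_hard_optimal_value (m d : ℕ) (hd : d + 1 ≤ m)
    (Q : Matrix (Fin m) (Fin m) ℝ) (hQ : Q.PosSemidef)
    (n : ℝ) (hn : 0 < n)
    (hQ1 : Q *ᵥ (fun _ => (1 : ℝ)) = n • (fun _ => (1 : ℝ)))
    (lam : Fin d → ℝ)
    (hlam_anti : ∀ i j : Fin d, i ≤ j → lam j ≤ lam i)
    (hlam_nonneg : ∀ j : Fin d, 0 ≤ lam j)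
    (ν : ℝ) (hν : n / (m : ℝ) ≤ ν) :
    sSup {c : ℝ | ∃ S : Matrix (Fin d) (Fin m) ℝ,
        S * Sᵀ = Matrix.diagonal lam ∧
        c = (S * (Q - ν • vecMulVec (fun _ => (1 : ℝ)) (fun _ => (1 : ℝ))) * Sᵀ).trace} =
      sSup {c : ℝ | ∃ S : Matrix (Fin d) (Fin m) ℝ,
        S * Sᵀ = Matrix.diagonal lam ∧ S *ᵥ (fun _ => (1 : ℝ)) = 0 ∧
        c = (S * Q * Sᵀ).trace} :=
  soft_eq_hard_optimal_value_general m d hd Q hQ n hQ1 lam ν hν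
end

section
/- Let K ∈ ℝ^{l×l} be symmetric and invertible, and let C̃ ∈ ℝ^{(d+1)×l} be such that C̃ K⁻¹ C̃ᵀ is invertible. Define Ē = K⁻¹ − K⁻¹ C̃ᵀ (C̃ K⁻¹ C̃ᵀ)⁻¹ C̃ K⁻¹ and F = (C̃ K⁻¹ C̃ᵀ)⁻¹ C̃ K⁻¹. Let M ∈ ℝ^{l×m} be arbitrary, let P̃ ∈ ℝ^{(d+1)×m} be any matrix whose last row is the all-ones row vector 𝟏ᵀ, and define the feature matrix B = Ē M + Fᵀ P̃ ∈ ℝ^{l×m}. Then the vector x = C̃ᵀ e_{d+1} ∈ ℝ^l, where e_{d+1} is the last standard basis vector of ℝ^{d+1}, satisfies Bᵀ x = 𝟏 and Ē x = 0. Consequently the Thin-Plate Spline warp contains free-translations: there exists x with B(D)ᵀ x = 𝟏 and Z x = 0 whenever Zᵀ Z = Ē. -/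
/-!
Write `S = C̃ K⁻¹ C̃ᵀ`. Since `S` is invertible, `Ē C̃ᵀ = 0`, `C̃ Ē = 0` and `F C̃ᵀ = 1`, so
`Bᵀ C̃ᵀ = Mᵀ (C̃ Ē)ᵀ + P̃ᵀ (F C̃ᵀ) = P̃ᵀ`. Applied to `e_{d+1}` this picks out the last row of `P̃`,
which is `𝟏`. Finally `Ē x = 0` forces `Z x = 0` when `Zᵀ Z = Ē`, because `|Z x|² = xᵀ Ē x`.
-/

open Matrix

noncomputable section

namespace ThinPlateSpline

variable {R : Type*} [CommRing R] {l n m : Type*} [Fintype l] [Fintype n] [DecidableEq n]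

-- `A` plays the role of `K⁻¹`; `bendingEnergy` is `Ē` and `affineCoeff` is `F`.
def bendingEnergy (A : Matrix l l R) (C : Matrix n l R) : Matrix l l R :=
  A - A * Cᵀ * (C * A * Cᵀ)⁻¹ * C * A

def affineCoeff (A : Matrix l l R) (C : Matrix n l R) : Matrix n l R :=
  (C * A * Cᵀ)⁻¹ * C * A

def featureMatrix (A : Matrix l l R) (C : Matrix n l R) (M : Matrix l m R)
    (P : Matrix n m R) : Matrix l m R :=
  bendingEnergy A C * M + (affineCoeff A C)ᵀ * P

variable {A : Matrix l l R} {C : Matrix n l R}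

theorem bendingEnergy_mul_transpose (hS : IsUnit (C * A * Cᵀ)) :
    bendingEnergy A C * Cᵀ = 0 := by
  have hinv : (C * A * Cᵀ)⁻¹ * (C * A * Cᵀ) = 1 :=
    nonsing_inv_mul _ ((isUnit_iff_isUnit_det _).mp hS)
  calc bendingEnergy A C * Cᵀ
      = A * Cᵀ - A * Cᵀ * ((C * A * Cᵀ)⁻¹ * (C * A * Cᵀ)) := by
        simp only [bendingEnergy, Matrix.sub_mul, Matrix.mul_assoc]
    _ = 0 := by rw [hinv, Matrix.mul_one, sub_self]

theorem mul_bendingEnergy (hS : IsUnit (C * A * Cᵀ)) :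
    C * bendingEnergy A C = 0 := by
  have hinv : (C * A * Cᵀ) * (C * A * Cᵀ)⁻¹ = 1 :=
    mul_nonsing_inv _ ((isUnit_iff_isUnit_det _).mp hS)
  calc C * bendingEnergy A C
      = C * A - (C * A * Cᵀ) * (C * A * Cᵀ)⁻¹ * (C * A) := by
        simp only [bendingEnergy, Matrix.mul_sub, Matrix.mul_assoc]
    _ = 0 := by rw [hinv, Matrix.one_mul, sub_self]

theorem affineCoeff_mul_transpose (hS : IsUnit (C * A * Cᵀ)) :
    affineCoeff A C * Cᵀ = 1 := by
  simpa only [affineCoeff, Matrix.mul_assoc] using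
    nonsing_inv_mul _ ((isUnit_iff_isUnit_det _).mp hS)

theorem transpose_featureMatrix_mul_transpose [Fintype m] (hS : IsUnit (C * A * Cᵀ))
    (M : Matrix l m R) (P : Matrix n m R) :
    (featureMatrix A C M P)ᵀ * Cᵀ = Pᵀ := by
  rw [featureMatrix, transpose_add, transpose_mul, transpose_mul, transpose_transpose,
    Matrix.add_mul, Matrix.mul_assoc, Matrix.mul_assoc, ← transpose_mul, mul_bendingEnergy hS,
    affineCoeff_mul_transpose hS, transpose_zero, Matrix.mul_zero, Matrix.mul_one, zero_add]

end ThinPlateSpline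

end

open ThinPlateSpline in
theorem tps_contains_free_translations_general (l d m : ℕ)
    (K : Matrix (Fin l) (Fin l) ℝ)
    (C : Matrix (Fin (d + 1)) (Fin l) ℝ)
    (hC : IsUnit (C * K⁻¹ * Cᵀ))
    (M : Matrix (Fin l) (Fin m) ℝ)
    (P : Matrix (Fin (d + 1)) (Fin m) ℝ)
    (hP : ∀ j, P (Fin.last d) j = 1) :
    ((K⁻¹ - K⁻¹ * Cᵀ * (C * K⁻¹ * Cᵀ)⁻¹ * C * K⁻¹) * M +
        ((C * K⁻¹ * Cᵀ)⁻¹ * C * K⁻¹)ᵀ * P)ᵀ *ᵥ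
        (Cᵀ *ᵥ Pi.single (Fin.last d) 1) = (fun _ => (1 : ℝ)) ∧
    (K⁻¹ - K⁻¹ * Cᵀ * (C * K⁻¹ * Cᵀ)⁻¹ * C * K⁻¹) *ᵥ
        (Cᵀ *ᵥ Pi.single (Fin.last d) 1) = 0 ∧
    ∀ (r : ℕ) (Z : Matrix (Fin r) (Fin l) ℝ),
      Zᵀ * Z = K⁻¹ - K⁻¹ * Cᵀ * (C * K⁻¹ * Cᵀ)⁻¹ * C * K⁻¹ →
      Z *ᵥ (Cᵀ *ᵥ Pi.single (Fin.last d) 1) = 0 := by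
  have hEx : bendingEnergy K⁻¹ C *ᵥ (Cᵀ *ᵥ Pi.single (Fin.last d) 1) = 0 := by
    rw [mulVec_mulVec, bendingEnergy_mul_transpose hC, zero_mulVec]
  refine ⟨?_, hEx, fun r Z hZ => ?_⟩
  · change (featureMatrix K⁻¹ C M P)ᵀ *ᵥ _ = _
    rw [mulVec_mulVec, transpose_featureMatrix_mul_transpose hC, mulVec_single_one]
    exact funext hP
  · rw [← conjTranspose_eq_transpose_of_trivial] at hZ
    exact (conjTranspose_mul_self_mulVec_eq_zero Z _).mp (hZ ▸ hEx)

/-- with `Ē = K⁻¹ − K⁻¹ C̃ᵀ (C̃ K⁻¹ C̃ᵀ)⁻¹ C̃ K⁻¹`,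
`F = (C̃ K⁻¹ C̃ᵀ)⁻¹ C̃ K⁻¹`, an arbitrary `M`, a matrix `P̃` whose last row is all
ones, and the feature matrix `B = Ē M + Fᵀ P̃`, the vector `x = C̃ᵀ e_{d+1}`
satisfies `Bᵀ x = 𝟏` and `Ē x = 0`; consequently `Z x = 0` whenever `Zᵀ Z = Ē`,
i.e. the Thin-Plate Spline warp contains free-translations. -/
theorem tps_contains_free_translations (l d m : ℕ)
    (K : Matrix (Fin l) (Fin l) ℝ) (hK_symm : K.IsSymm) (hK : IsUnit K)
    (C : Matrix (Fin (d + 1)) (Fin l) ℝ)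
    (hC : IsUnit (C * K⁻¹ * Cᵀ))
    (M : Matrix (Fin l) (Fin m) ℝ)
    (P : Matrix (Fin (d + 1)) (Fin m) ℝ)
    (hP : ∀ j, P (Fin.last d) j = 1) :
    ((K⁻¹ - K⁻¹ * Cᵀ * (C * K⁻¹ * Cᵀ)⁻¹ * C * K⁻¹) * M +
        ((C * K⁻¹ * Cᵀ)⁻¹ * C * K⁻¹)ᵀ * P)ᵀ *ᵥ
        (Cᵀ *ᵥ Pi.single (Fin.last d) 1) = (fun _ => (1 : ℝ)) ∧
    (K⁻¹ - K⁻¹ * Cᵀ * (C * K⁻¹ * Cᵀ)⁻¹ * C * K⁻¹) *ᵥ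
        (Cᵀ *ᵥ Pi.single (Fin.last d) 1) = 0 ∧
    ∀ (r : ℕ) (Z : Matrix (Fin r) (Fin l) ℝ),
      Zᵀ * Z = K⁻¹ - K⁻¹ * Cᵀ * (C * K⁻¹ * Cᵀ)⁻¹ * C * K⁻¹ →
      Z *ᵥ (Cᵀ *ᵥ Pi.single (Fin.last d) 1) = 0 :=
  tps_contains_free_translations_general l d m K C hC M P hP
end
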